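/- arXiv:math/9911015 — 7 statements merged into one kernel-verified Lean document; each statement's English description precedes it below -/
import Mathlib

section
/- Let (U₁, U₂) be a type I pair: upper triangular matrices Uᵢ = [[αᵢ, βᵢ], [0, γᵢ]] with internal relations αᵢγᵢ = γᵢαᵢ = 1 and αᵢβᵢ = βᵢγᵢ, and mutual relations α₁α₂ = qα₂α₁, α₁β₂ = qβ₂γ₁, β₁γ₂ = qα₂β₁. Then for all integers n, m, writing U₁^n U₂^m = [[α(n,m), β(n,m)], [0, γ(n,m)]], one has α(n,m)γ(n,m) = γ(n,m)α(n,m) = q^{nm}·1. -/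
/-!
The diagonal of a product of upper triangular matrices is the product of the diagonals, so the
diagonal entries of `U₁ⁿ U₂ᵐ` are `α₁ⁿ α₂ᵐ` and `γ₁ⁿ γ₂ᵐ = α₁⁻ⁿ α₂⁻ᵐ`. In the unit group of `A`,
`α₁ α₂ = q α₂ α₁` says that the commutator `⁅α₁, α₂⁆` is the central unit `q • 1`, and a central
commutator is bimultiplicative: `⁅aⁿ, bᵐ⁆ = ⁅a, b⁆ ^ (n m)`. Both products of the two diagonal
entries are commutators of this form, `⁅α₁ⁿ, α₂ᵐ⁆` and `⁅α₁⁻ⁿ, α₂⁻ᵐ⁆`.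
-/

open scoped commutatorElement

section CentralCommutator

variable {G : Type*} [Group G] {a b c : G}

theorem mul_zpow_eq_of_mul_eq (hcb : Commute c b) (h : a * b = c * (b * a)) (m : ℤ) :
    a * b ^ m = c ^ m * (b ^ m * a) := by
  have hab : SemiconjBy a b (c * b) := by rw [SemiconjBy, h, mul_assoc]
  rw [← mul_assoc, ← hcb.mul_zpow, (hab.zpow_right m).eq]

theorem zpow_mul_zpow_eq_of_mul_eq (hca : Commute c a) (hcb : Commute c b)
    (h : a * b = c * (b * a)) (n m : ℤ) : a ^ n * b ^ m = c ^ (n * m) * (b ^ m * a ^ n) := by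
  have hba : b ^ m * a = c ^ (-m) * (a * b ^ m) := by
    rw [mul_zpow_eq_of_mul_eq hcb h, zpow_neg, inv_mul_cancel_left]
  rw [mul_zpow_eq_of_mul_eq (hca.zpow_left (-m)) hba n, ← mul_assoc, ← zpow_mul, ← mul_assoc,
    ← zpow_add, show n * m + -m * n = 0 by ring, zpow_zero, one_mul]

theorem commutatorElement_zpow_zpow (hca : Commute c a) (hcb : Commute c b) (h : ⁅a, b⁆ = c)
    (n m : ℤ) : ⁅a ^ n, b ^ m⁆ = c ^ (n * m) := by
  have hab : a * b = c * (b * a) := by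
    rw [← h, commutatorElement_def]; group
  rw [commutatorElement_def, zpow_mul_zpow_eq_of_mul_eq hca hcb hab]
  group

end CentralCommutator

section UpperTriangular

variable {A : Type*} [Ring A]

theorem upperTriangular_mul_upperTriangular (a b g a' b' g' : A) :
    !![a, b; 0, g] * !![a', b'; 0, g'] = !![a * a', a * b' + b * g'; 0, g * g'] := by
  simp

theorem val_inv_of_val_eq_upperTriangular {W : (Matrix (Fin 2) (Fin 2) A)ˣ} {a g : Aˣ} {b : A}
    (hW : W.val = !![(a : A), b; 0, (g : A)]) :
    (W⁻¹).val = !![((a⁻¹ : Aˣ) : A), -((a⁻¹ : Aˣ) * b * (g⁻¹ : Aˣ)); 0, ((g⁻¹ : Aˣ) : A)] := by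
  refine Units.inv_eq_of_mul_eq_one_right ?_
  rw [hW, upperTriangular_mul_upperTriangular, Matrix.one_fin_two]
  simp [mul_neg, ← mul_assoc]

theorem exists_val_zpow_eq_upperTriangular {W : (Matrix (Fin 2) (Fin 2) A)ˣ} {a g : Aˣ} {b : A}
    (hW : W.val = !![(a : A), b; 0, (g : A)]) (n : ℤ) :
    ∃ b', (W ^ n).val = !![((a ^ n : Aˣ) : A), b'; 0, ((g ^ n : Aˣ) : A)] := by
  induction n using Int.induction_on with
  | zero => exact ⟨0, by simp [Matrix.one_fin_two]⟩
  | succ n ih =>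
    obtain ⟨b', hb'⟩ := ih
    rw [zpow_add_one, Units.val_mul, hb', hW, upperTriangular_mul_upperTriangular]
    simp only [zpow_add_one, Units.val_mul]
    exact ⟨_, rfl⟩
  | pred n ih =>
    obtain ⟨b', hb'⟩ := ih
    rw [zpow_sub_one, Units.val_mul, hb', val_inv_of_val_eq_upperTriangular hW,
      upperTriangular_mul_upperTriangular]
    simp only [zpow_sub_one, Units.val_mul]
    exact ⟨_, rfl⟩

end UpperTriangular

section AlgebraMapUnit

variable {k A : Type*} [Field k] [Ring A] [Algebra k A]

theorem commute_map_algebraMap (t : kˣ) (x : Aˣ) :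
    Commute (Units.map (algebraMap k A).toMonoidHom t) x :=
  Units.ext (Algebra.commutes (t : k) (x : A))

theorem val_map_algebraMap_zpow (t : kˣ) (z : ℤ) :
    ((Units.map (algebraMap k A).toMonoidHom t ^ z : Aˣ) : A) = (t : k) ^ z • (1 : A) := by
  rw [← map_zpow, Units.coe_map, ← Units.val_zpow_eq_zpow_val]
  exact Algebra.algebraMap_eq_smul_one _

end AlgebraMapUnit

theorem typeI_diagonal_relations_general {k A : Type*} [Field k] [Ring A] [Algebra k A]
    (q : k) (hq0 : q ≠ 0)
    (α₁ γ₁ α₂ γ₂ : Aˣ) (β₁ β₂ : A)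
    -- internal relations (ID1)
    (hI1' : (γ₁ : A) * (α₁ : A) = 1)
    (hI2' : (γ₂ : A) * (α₂ : A) = 1)
    -- mutual relations (MD1) and (MND)
    (hAA : (α₁ : A) * (α₂ : A) = q • ((α₂ : A) * (α₁ : A)))
    (V₁ V₂ : (Matrix (Fin 2) (Fin 2) A)ˣ)
    (hV₁ : V₁.val = !![(α₁ : A), β₁; 0, (γ₁ : A)])
    (hV₂ : V₂.val = !![(α₂ : A), β₂; 0, (γ₂ : A)]) :
    ∀ n m : ℤ,
      (V₁ ^ n * V₂ ^ m).val 0 0 *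
        (V₁ ^ n * V₂ ^ m).val 1 1
        = (V₁ ^ n * V₂ ^ m).val 1 1 *
          (V₁ ^ n * V₂ ^ m).val 0 0 ∧
      (V₁ ^ n * V₂ ^ m).val 0 0 *
        (V₁ ^ n * V₂ ^ m).val 1 1
        = q ^ (n * m) • (1 : A) := by
  intro n m
  set u : Aˣ := Units.map (algebraMap k A).toMonoidHom (Units.mk0 q hq0)
  have hγ₁ : γ₁ = α₁⁻¹ := eq_inv_of_mul_eq_one_left (Units.ext hI1')
  have hγ₂ : γ₂ = α₂⁻¹ := eq_inv_of_mul_eq_one_left (Units.ext hI2')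
  have hα : ⁅α₁, α₂⁆ = u := by
    rw [commutatorElement_def, mul_inv_eq_iff_eq_mul, mul_inv_eq_iff_eq_mul]
    ext
    simp [u, hAA, Algebra.smul_def, mul_assoc]
  have hdiag (s t : ℤ) : (α₁ ^ s * α₂ ^ t) * (α₁ ^ (-s) * α₂ ^ (-t)) = u ^ (s * t) := by
    rw [← commutatorElement_zpow_zpow (commute_map_algebraMap _ α₁) (commute_map_algebraMap _ α₂)
      hα, commutatorElement_def]
    group
  obtain ⟨b₁, hb₁⟩ := exists_val_zpow_eq_upperTriangular hV₁ n
  obtain ⟨b₂, hb₂⟩ := exists_val_zpow_eq_upperTriangular hV₂ m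
  have h00 : (V₁ ^ n * V₂ ^ m).val 0 0 = ((α₁ ^ n * α₂ ^ m : Aˣ) : A) := by
    simp [hb₁, hb₂]
  have h11 : (V₁ ^ n * V₂ ^ m).val 1 1 = ((α₁ ^ (-n) * α₂ ^ (-m) : Aˣ) : A) := by
    simp [hb₁, hb₂, hγ₁, hγ₂]
  rw [h00, h11, ← Units.val_mul, ← Units.val_mul, hdiag]
  constructor
  · rw [← neg_mul_neg, ← hdiag (-n) (-m), neg_neg, neg_neg]
  · rw [val_map_algebraMap_zpow, Units.val_mk0]

/-- Type I pairs: the diagonal entries of `U₁ⁿ U₂ᵐ` commute and their product is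
`q^{nm} · 1`. -/
theorem typeI_diagonal_relations {k A : Type*} [Field k] [CharZero k] [Ring A] [Algebra k A]
    (q : k) (hq0 : q ≠ 0) (hq1 : q ≠ 1)
    (α₁ γ₁ α₂ γ₂ : Aˣ) (β₁ β₂ : A)
    -- internal relations (ID1)
    (hI1 : (α₁ : A) * (γ₁ : A) = 1) (hI1' : (γ₁ : A) * (α₁ : A) = 1)
    (hI2 : (α₂ : A) * (γ₂ : A) = 1) (hI2' : (γ₂ : A) * (α₂ : A) = 1)
    -- internal relations (IND1)
    (hB1 : (α₁ : A) * β₁ = β₁ * (γ₁ : A)) (hB2 : (α₂ : A) * β₂ = β₂ * (γ₂ : A))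
    -- mutual relations (MD1) and (MND)
    (hAA : (α₁ : A) * (α₂ : A) = q • ((α₂ : A) * (α₁ : A)))
    (hAB : (α₁ : A) * β₂ = q • (β₂ * (γ₁ : A)))
    (hBC : β₁ * (γ₂ : A) = q • ((α₂ : A) * β₁))
    (V₁ V₂ : (Matrix (Fin 2) (Fin 2) A)ˣ)
    (hV₁ : V₁.val = !![(α₁ : A), β₁; 0, (γ₁ : A)])
    (hV₂ : V₂.val = !![(α₂ : A), β₂; 0, (γ₂ : A)]) :
    ∀ n m : ℤ,
      (V₁ ^ n * V₂ ^ m).val 0 0 *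
        (V₁ ^ n * V₂ ^ m).val 1 1
        = (V₁ ^ n * V₂ ^ m).val 1 1 *
          (V₁ ^ n * V₂ ^ m).val 0 0 ∧
      (V₁ ^ n * V₂ ^ m).val 0 0 *
        (V₁ ^ n * V₂ ^ m).val 1 1
        = q ^ (n * m) • (1 : A) :=
  typeI_diagonal_relations_general q hq0 α₁ γ₁ α₂ γ₂ β₁ β₂ hI1' hI2' hAA V₁ V₂ hV₁ hV₂
end

section
/- Let (U₁, U₂) be a type I pair: upper triangular matrices with internal relations αᵢγᵢ = γᵢαᵢ = 1 and αᵢβᵢ = βᵢγᵢ, and mutual relations α₁α₂ = qα₂α₁, α₁β₂ = qβ₂γ₁, β₁γ₂ = qα₂β₁. Then for all integers n, m, the entries of U₁^n U₂^m = [[α(n,m), β(n,m)], [0, γ(n,m)]] satisfy α(n,m)β(n,m) = β(n,m)γ(n,m). -/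
/-!
Each of the type I relations says that some `y` intertwines two units `u`, `v` up to a scalar:
`u * y = c • (y * v)`. This relation is multiplicative in the pair `(u, v)` (with the scalars
multiplying) and in `y`, so it passes to integer powers and to words in the generators.
From `α₁β₁ = β₁α₁⁻¹` one gets `U₁ⁿ = !![α₁ⁿ, n • β₁α₁^(1-n); 0, α₁⁻ⁿ]`, so the corner of
`U₁ⁿU₂ᵐ` is a combination of the words `α₁ⁿ β₂ α₂^(1-m)` and `β₁ α₁^(1-n) α₂^(-m)`. Reading them
letter by letter, each intertwines `α₁ⁿα₂ᵐ` with `α₁⁻ⁿα₂⁻ᵐ` up to a power of `q` whose exponent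
sums to zero.
-/

section
variable {R A : Type*} [CommSemiring R] [Semiring A] [Algebra R A]

def QIntertwines (c : R) (u v y : A) : Prop :=
  u * y = c • (y * v)

namespace QIntertwines
variable {c d : R} {u v w u' v' y z : A}

theorem one_iff : QIntertwines (1 : R) u v y ↔ u * y = y * v := by
  rw [QIntertwines, one_smul]

theorem mul_left (h : QIntertwines c u u' y) (h' : QIntertwines d v v' y) :
    QIntertwines (c * d) (u * v) (u' * v') y := by
  rw [QIntertwines, mul_assoc, h', mul_smul_comm, ← mul_assoc, h, smul_mul_assoc, smul_smul,
    mul_comm d, mul_assoc]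

theorem mul_right (h : QIntertwines c u v y) (h' : QIntertwines d v w z) :
    QIntertwines (c * d) u w (y * z) := by
  rw [QIntertwines, ← mul_assoc, h, smul_mul_assoc, mul_assoc, h', mul_smul_comm, smul_smul,
    mul_assoc]

theorem add (h : QIntertwines c u v y) (h' : QIntertwines c u v z) :
    QIntertwines c u v (y + z) := by
  rw [QIntertwines, mul_add, h, h', add_mul, smul_add]

theorem smul {S : Type*} [SMul S A] [SMulCommClass S A A] [IsScalarTower S A A]
    [SMulCommClass S R A] (h : QIntertwines c u v y) (s : S) : QIntertwines c u v (s • y) := by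
  rw [QIntertwines, mul_smul_comm, h, smul_mul_assoc, smul_comm]

theorem units_pow {u v : Aˣ} (h : QIntertwines c (u : A) v y) (n : ℕ) :
    QIntertwines (c ^ n) ((u ^ n : Aˣ) : A) ((v ^ n : Aˣ) : A) y := by
  induction n with
  | zero => simp [QIntertwines]
  | succ n ih => simpa only [pow_succ, Units.val_mul] using ih.mul_left h

end QIntertwines
end

namespace QIntertwines
variable {k A : Type*} [Semifield k] [Semiring A] [Algebra k A] {c : k} {u y : A}

theorem symm (hc : c ≠ 0) (h : QIntertwines c u u y) : QIntertwines c⁻¹ y y u := by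
  rw [QIntertwines, h, inv_smul_smul₀ hc]

theorem units_inv {u v : Aˣ} (hc : c ≠ 0) (h : QIntertwines c (u : A) v y) :
    QIntertwines c⁻¹ ((u⁻¹ : Aˣ) : A) ((v⁻¹ : Aˣ) : A) y := by
  rw [QIntertwines, eq_inv_smul_iff₀ hc]
  calc c • (((u⁻¹ : Aˣ) : A) * y) = ((u⁻¹ : Aˣ) : A) * (c • (y * v)) * ((v⁻¹ : Aˣ) : A) := by
        rw [mul_smul_comm, smul_mul_assoc, mul_assoc, mul_assoc, Units.mul_inv, mul_one]
    _ = y * ((v⁻¹ : Aˣ) : A) := by rw [← h, ← mul_assoc, Units.inv_mul, one_mul]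

theorem units_zpow {u v : Aˣ} (hc : c ≠ 0) (h : QIntertwines c (u : A) v y) (n : ℤ) :
    QIntertwines (c ^ n) ((u ^ n : Aˣ) : A) ((v ^ n : Aˣ) : A) y := by
  obtain ⟨n, rfl | rfl⟩ := Int.eq_nat_or_neg n
  · simpa using h.units_pow n
  · simpa [inv_pow] using (h.units_inv hc).units_pow n

end QIntertwines

section QuantumTorus
variable {k A : Type*} [Semifield k] [Semiring A] [Algebra k A] {q : k} {a b : Aˣ}

theorem qIntertwines_zpow_zpow (hq : q ≠ 0) (hab : QIntertwines q (a : A) a b) (i l : ℤ) :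
    QIntertwines (q ^ (i * l)) ((a ^ i : Aˣ) : A) ((a ^ i : Aˣ) : A) ((b ^ l : Aˣ) : A) := by
  have hqi : q ^ i ≠ 0 := zpow_ne_zero i hq
  have h := (((hab.units_zpow hq i).symm hqi).units_zpow (inv_ne_zero hqi) l).symm
    (zpow_ne_zero l (inv_ne_zero hqi))
  rwa [inv_zpow, inv_inv, ← zpow_mul] at h

theorem qIntertwines_monomial_zpow_fst (hq : q ≠ 0) (hab : QIntertwines q (a : A) a b)
    (i j l : ℤ) :
    QIntertwines (q ^ (-(l * j))) ((a ^ i * b ^ j : Aˣ) : A) ((a ^ i * b ^ j : Aˣ) : A)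
      ((a ^ l : Aˣ) : A) := by
  have haa : QIntertwines (1 : k) ((a ^ i : Aˣ) : A) ((a ^ i : Aˣ) : A) ((a ^ l : Aˣ) : A) := by
    rw [QIntertwines.one_iff, ← Units.val_mul, ← Units.val_mul, ← zpow_add, ← zpow_add, add_comm]
  have hba := (qIntertwines_zpow_zpow hq hab l j).symm (zpow_ne_zero _ hq)
  rw [← zpow_neg] at hba
  simpa using haa.mul_left hba

theorem qIntertwines_monomial_zpow_snd (hq : q ≠ 0) (hab : QIntertwines q (a : A) a b)
    (i j l : ℤ) :
    QIntertwines (q ^ (i * l)) ((a ^ i * b ^ j : Aˣ) : A) ((a ^ i * b ^ j : Aˣ) : A)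
      ((b ^ l : Aˣ) : A) := by
  have hbb : QIntertwines (1 : k) ((b ^ j : Aˣ) : A) ((b ^ j : Aˣ) : A) ((b ^ l : Aˣ) : A) := by
    rw [QIntertwines.one_iff, ← Units.val_mul, ← Units.val_mul, ← zpow_add, ← zpow_add, add_comm]
  simpa using (qIntertwines_zpow_zpow hq hab i l).mul_left hbb

theorem qIntertwines_monomial {c d : k} (hc : c ≠ 0) (hd : d ≠ 0) {y : A}
    (ha : QIntertwines c (a : A) ((a⁻¹ : Aˣ) : A) y)
    (hb : QIntertwines d (b : A) ((b⁻¹ : Aˣ) : A) y) (i j : ℤ) :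
    QIntertwines (c ^ i * d ^ j) ((a ^ i * b ^ j : Aˣ) : A) ((a ^ (-i) * b ^ (-j) : Aˣ) : A) y := by
  simpa [zpow_neg] using (ha.units_zpow hc i).mul_left (hb.units_zpow hd j)

end QuantumTorus

theorem qIntertwines_corner {k A : Type*} [Semifield k] [Ring A] [Algebra k A] {q : k}
    {a b : Aˣ} {y₁ y₂ : A} (hq : q ≠ 0) (hab : QIntertwines q (a : A) a b)
    (h₁a : QIntertwines (1 : k) (a : A) ((a⁻¹ : Aˣ) : A) y₁)
    (h₁b : QIntertwines q⁻¹ (b : A) ((b⁻¹ : Aˣ) : A) y₁)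
    (h₂a : QIntertwines q (a : A) ((a⁻¹ : Aˣ) : A) y₂)
    (h₂b : QIntertwines (1 : k) (b : A) ((b⁻¹ : Aˣ) : A) y₂) (n m : ℤ) :
    QIntertwines (1 : k) ((a ^ n * b ^ m : Aˣ) : A) ((a ^ (-n) * b ^ (-m) : Aˣ) : A)
      (((a ^ n : Aˣ) : A) * (m • (y₂ * ((b ^ (1 - m) : Aˣ) : A))) +
        n • (y₁ * ((a ^ (1 - n) : Aˣ) : A)) * ((b ^ (-m) : Aˣ) : A)) := by
  have word₂ := (qIntertwines_monomial_zpow_fst hq hab n m n).mul_right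
    ((qIntertwines_monomial hq one_ne_zero h₂a h₂b n m).mul_right
      (qIntertwines_monomial_zpow_snd hq hab (-n) (-m) (1 - m)))
  have word₁ := ((qIntertwines_monomial one_ne_zero (inv_ne_zero hq) h₁a h₁b n m).mul_right
    (qIntertwines_monomial_zpow_fst hq hab (-n) (-m) (1 - n))).mul_right
    (qIntertwines_monomial_zpow_snd hq hab (-n) (-m) (-m))
  rw [mul_smul_comm, smul_mul_assoc]
  refine (QIntertwines.smul ?_ m).add (QIntertwines.smul ?_ n)
  · convert word₂ using 1
    simp only [one_zpow, mul_one, ← zpow_add₀ hq]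
    rw [← zpow_zero q]
    ring_nf
  · convert word₁ using 1
    simp only [one_zpow, one_mul, inv_zpow', ← zpow_add₀ hq]
    rw [← zpow_zero q]
    ring_nf

section UpperTriangular
variable {A : Type*} [Ring A] (x : Aˣ) (y : A)

def upperTriangularPow (n : ℤ) : Matrix (Fin 2) (Fin 2) A :=
  !![((x ^ n : Aˣ) : A), n • (y * ((x ^ (1 - n) : Aˣ) : A)); 0, ((x ^ (-n) : Aˣ) : A)]

theorem upperTriangularPow_zero : upperTriangularPow x y 0 = 1 := by
  simp [upperTriangularPow, Matrix.one_fin_two]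

theorem upperTriangularPow_one :
    upperTriangularPow x y 1 = !![(x : A), y; 0, ((x⁻¹ : Aˣ) : A)] := by
  simp [upperTriangularPow]

variable {x y}

theorem upperTriangularPow_add (hxy : (x : A) * y = y * ((x⁻¹ : Aˣ) : A)) (i j : ℤ) :
    upperTriangularPow x y (i + j) = upperTriangularPow x y i * upperTriangularPow x y j := by
  have hxy' (p : ℤ) : ((x ^ p : Aˣ) : A) * y = y * ((x ^ (-p) : Aˣ) : A) := by
    rw [← inv_zpow']
    exact (SemiconjBy.units_zpow_right hxy.symm p).eq.symm
  have corner : ((x ^ i : Aˣ) : A) * (y * ((x ^ (1 - j) : Aˣ) : A))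
      = y * ((x ^ (1 - (i + j)) : Aˣ) : A) := by
    rw [← mul_assoc, hxy', mul_assoc, ← Units.val_mul, ← zpow_add]
    ring_nf
  simp only [upperTriangularPow, Matrix.mul_fin_two, mul_zero, zero_mul, add_zero, smul_zero,
    zero_add, ← Units.val_mul, ← zpow_add, mul_smul_comm, corner, smul_mul_assoc, mul_assoc]
  rw [show 1 - i + -j = 1 - (i + j) by ring, ← neg_add, add_comm i j, add_smul]

theorem val_zpow_eq_upperTriangularPow (hxy : (x : A) * y = y * ((x⁻¹ : Aˣ) : A))
    {U : (Matrix (Fin 2) (Fin 2) A)ˣ} (hU : U.val = !![(x : A), y; 0, ((x⁻¹ : Aˣ) : A)]) (n : ℤ) :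
    (U ^ n).val = upperTriangularPow x y n := by
  have pow_nat (n : ℕ) : (U ^ n).val = upperTriangularPow x y n := by
    induction n with
    | zero => simp [upperTriangularPow_zero]
    | succ n ih =>
      rw [Nat.cast_succ, pow_succ, Units.val_mul, ih, hU, ← upperTriangularPow_one,
        ← upperTriangularPow_add hxy]
  obtain ⟨n, rfl | rfl⟩ := Int.eq_nat_or_neg n
  · simpa using pow_nat n
  · rw [zpow_neg, zpow_natCast]
    refine Units.inv_eq_of_mul_eq_one_left ?_
    rw [pow_nat, ← upperTriangularPow_add hxy, neg_add_cancel, upperTriangularPow_zero]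

end UpperTriangular

theorem typeI_nondiagonal_relation_general {k A : Type*} [Field k] [Ring A] [Algebra k A]
    (q : k) (hq0 : q ≠ 0)
    (α₁ γ₁ α₂ γ₂ : Aˣ) (β₁ β₂ : A)
    (hI1 : (α₁ : A) * (γ₁ : A) = 1)
    (hI2 : (α₂ : A) * (γ₂ : A) = 1)
    (hB1 : (α₁ : A) * β₁ = β₁ * (γ₁ : A)) (hB2 : (α₂ : A) * β₂ = β₂ * (γ₂ : A))
    (hAA : (α₁ : A) * (α₂ : A) = q • ((α₂ : A) * (α₁ : A)))
    (hAB : (α₁ : A) * β₂ = q • (β₂ * (γ₁ : A)))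
    (hBC : β₁ * (γ₂ : A) = q • ((α₂ : A) * β₁))
    (V₁ V₂ : (Matrix (Fin 2) (Fin 2) A)ˣ)
    (hV₁ : V₁.val = !![(α₁ : A), β₁; 0, (γ₁ : A)])
    (hV₂ : V₂.val = !![(α₂ : A), β₂; 0, (γ₂ : A)]) :
    ∀ n m : ℤ,
      (V₁ ^ n * V₂ ^ m).val 0 0 *
        (V₁ ^ n * V₂ ^ m).val 0 1
        = (V₁ ^ n * V₂ ^ m).val 0 1 *
          (V₁ ^ n * V₂ ^ m).val 1 1 := by
  obtain rfl : γ₁ = α₁⁻¹ := (inv_eq_of_mul_eq_one_right (Units.ext hI1)).symm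
  obtain rfl : γ₂ = α₂⁻¹ := (inv_eq_of_mul_eq_one_right (Units.ext hI2)).symm
  have h₁b : QIntertwines q⁻¹ (α₂ : A) ((α₂⁻¹ : Aˣ) : A) β₁ := by
    rw [QIntertwines, hBC, inv_smul_smul₀ hq0]
  intro n m
  have corner := qIntertwines_corner hq0 hAA (QIntertwines.one_iff.mpr hB1) h₁b hAB
    (QIntertwines.one_iff.mpr hB2) n m
  rw [QIntertwines.one_iff] at corner
  rw [Units.val_mul, val_zpow_eq_upperTriangularPow hB1 hV₁,
    val_zpow_eq_upperTriangularPow hB2 hV₂]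
  simpa [upperTriangularPow, Matrix.mul_fin_two] using corner

/-- Type I pairs: the entries of `U₁ⁿ U₂ᵐ` satisfy the internal relation
`α(n,m) β(n,m) = β(n,m) γ(n,m)`. -/
theorem typeI_nondiagonal_relation {k A : Type*} [Field k] [CharZero k] [Ring A] [Algebra k A]
    (q : k) (hq0 : q ≠ 0) (hq1 : q ≠ 1)
    (α₁ γ₁ α₂ γ₂ : Aˣ) (β₁ β₂ : A)
    (hI1 : (α₁ : A) * (γ₁ : A) = 1) (hI1' : (γ₁ : A) * (α₁ : A) = 1)
    (hI2 : (α₂ : A) * (γ₂ : A) = 1) (hI2' : (γ₂ : A) * (α₂ : A) = 1)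
    (hB1 : (α₁ : A) * β₁ = β₁ * (γ₁ : A)) (hB2 : (α₂ : A) * β₂ = β₂ * (γ₂ : A))
    (hAA : (α₁ : A) * (α₂ : A) = q • ((α₂ : A) * (α₁ : A)))
    (hAB : (α₁ : A) * β₂ = q • (β₂ * (γ₁ : A)))
    (hBC : β₁ * (γ₂ : A) = q • ((α₂ : A) * β₁))
    (V₁ V₂ : (Matrix (Fin 2) (Fin 2) A)ˣ)
    (hV₁ : V₁.val = !![(α₁ : A), β₁; 0, (γ₁ : A)])
    (hV₂ : V₂.val = !![(α₂ : A), β₂; 0, (γ₂ : A)]) :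
    ∀ n m : ℤ,
      (V₁ ^ n * V₂ ^ m).val 0 0 *
        (V₁ ^ n * V₂ ^ m).val 0 1
        = (V₁ ^ n * V₂ ^ m).val 0 1 *
          (V₁ ^ n * V₂ ^ m).val 1 1 :=
  typeI_nondiagonal_relation_general q hq0 α₁ γ₁ α₂ γ₂ β₁ β₂ hI1 hI2 hB1 hB2 hAA hAB hBC V₁ V₂ hV₁
    hV₂
end

section
/- Let (U₁, U₂) be a type II pair: upper triangular matrices with internal relations αᵢγᵢ = γᵢαᵢ and αᵢβᵢ = βᵢγᵢ, and mutual relations α₁α₂ = qα₂α₁, α₁γ₂ = q⁻¹γ₂α₁, α₂γ₁ = qγ₁α₂, γ₁γ₂ = qγ₂γ₁, α₁β₂ = qβ₂γ₁, β₁γ₂ = qα₂β₁. Then for all integers n, m, the entries of U₁^n U₂^m satisfy α(n,m)γ(n,m) = γ(n,m)α(n,m) and α(n,m)β(n,m) = β(n,m)γ(n,m). -/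
/-!
Write `Dᵢ = diag(αᵢ, γᵢ)` for the diagonal part of `Uᵢ`. For a triangular matrix
`[[α, β], [0, γ]]` the relation `αβ = βγ` says exactly that it commutes with its diagonal part,
and the mutual relations say `D₁ U₂ = q U₂ D₁` and `U₁ D₂ = q D₂ U₁`. Taking the diagonal part is
a group homomorphism on invertible upper triangular matrices, so the diagonal part of `U₁ⁿ U₂ᵐ` is
`D₁ⁿ D₂ᵐ`; moving `D₁ⁿ` past `U₂ᵐ` and `U₁ⁿ` past `D₂ᵐ` produces the factors `q^{-nm}` and
`q^{nm}`, which cancel, so `U₁ⁿ U₂ᵐ` commutes with `D₁ⁿ D₂ᵐ`. The same cancellation, applied to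
the `αᵢ` and `γᵢ` in `A`, gives `α(n,m) γ(n,m) = γ(n,m) α(n,m)`.
-/

section CentralCommutator

variable {G : Type*} [Group G] {z : G}

theorem zpow_mul_zpow_of_mul_eq_central_mul (hz : z ∈ Subgroup.center G) {x y : G}
    (h : x * y = z * (y * x)) (n m : ℤ) :
    x ^ n * y ^ m = z ^ (n * m) * (y ^ m * x ^ n) := by
  have hzc : ∀ g : G, Commute z g := fun g => (Subgroup.mem_center_iff.mp hz g).symm
  have hy : SemiconjBy x y (z * y) := by rw [SemiconjBy, h, mul_assoc]
  have hym : x * y ^ m = z ^ m * y ^ m * x := by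
    rw [← (hzc y).mul_zpow]; exact hy.zpow_right m
  have hx : SemiconjBy (y ^ m) (z ^ m * x) x := by
    rw [SemiconjBy, hym, ← mul_assoc, ((hzc y).zpow_zpow m m).eq]
  rw [← hx.zpow_right n, ((hzc x).zpow_left m).mul_zpow, ← zpow_mul, mul_comm m n,
    ((hzc _).zpow_left _).left_comm]

theorem commute_zpow_mul_zpow_of_mul_eq_central_mul (hz : z ∈ Subgroup.center G) {x₁ x₂ y₁ y₂ : G}
    (h₁ : Commute x₁ y₁) (h₂ : Commute x₂ y₂)
    (h₂₁ : y₁ * x₂ = z * (x₂ * y₁)) (h₁₂ : x₁ * y₂ = z * (y₂ * x₁)) (n m : ℤ) :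
    Commute (x₁ ^ n * x₂ ^ m) (y₁ ^ n * y₂ ^ m) := by
  have hw : ∀ g : G, Commute (z ^ (n * m)) g :=
    fun g => (Subgroup.mem_center_iff.mp (zpow_mem hz _) g).symm
  have e₂₁ := zpow_mul_zpow_of_mul_eq_central_mul hz h₂₁ n m
  have e₁₂ := zpow_mul_zpow_of_mul_eq_central_mul hz h₁₂ n m
  apply mul_left_cancel (a := z ^ (n * m))
  calc z ^ (n * m) * (x₁ ^ n * x₂ ^ m * (y₁ ^ n * y₂ ^ m))
      = x₁ ^ n * (y₁ ^ n * x₂ ^ m) * y₂ ^ m := by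
        rw [e₂₁]; simp only [mul_assoc, (hw _).left_comm]
    _ = y₁ ^ n * (x₁ ^ n * y₂ ^ m) * x₂ ^ m := by
        simp only [← mul_assoc, (h₁.zpow_zpow n n).eq]
        simp only [mul_assoc, (h₂.zpow_zpow m m).eq]
    _ = z ^ (n * m) * (y₁ ^ n * y₂ ^ m * (x₁ ^ n * x₂ ^ m)) := by
        rw [e₁₂]; simp only [mul_assoc, (hw _).left_comm]

end CentralCommutator

section AlgebraUnits

variable {k B : Type*} [CommSemiring k] [Semiring B] [Algebra k B]

theorem Units.map_algebraMap_mem_center (c : kˣ) :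
    Units.map (algebraMap k B : k →* B) c ∈ Subgroup.center Bˣ :=
  Subgroup.mem_center_iff.mpr fun _ => Units.ext (Algebra.commutes _ _).symm

theorem Units.mul_eq_map_algebraMap_mul {c : kˣ} {x y u v : Bˣ}
    (h : (x * y : B) = (c : k) • (u * v : B)) :
    x * y = Units.map (algebraMap k B : k →* B) c * (u * v) :=
  Units.ext (by simpa [Algebra.smul_def] using h)

theorem Units.commute_zpow_mul_zpow_of_mul_eq_smul_mul {c : kˣ} {x₁ x₂ y₁ y₂ : Bˣ}
    (h₁ : Commute x₁ y₁) (h₂ : Commute x₂ y₂)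
    (h₂₁ : (y₁ * x₂ : B) = (c : k) • (x₂ * y₁ : B)) (h₁₂ : (x₁ * y₂ : B) = (c : k) • (y₂ * x₁ : B))
    (n m : ℤ) : Commute (x₁ ^ n * x₂ ^ m) (y₁ ^ n * y₂ ^ m) :=
  commute_zpow_mul_zpow_of_mul_eq_central_mul (map_algebraMap_mem_center c) h₁ h₂
    (mul_eq_map_algebraMap_mul h₂₁) (mul_eq_map_algebraMap_mul h₁₂) n m

end AlgebraUnits

namespace Matrix

variable {A : Type*} [Ring A]

local notation "Mat" => Matrix (Fin 2) (Fin 2) A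

theorem fin_two_mul_apply_one_zero {M N : Mat} (hM : M 1 0 = 0) (hN : N 1 0 = 0) :
    (M * N) 1 0 = 0 := by
  simp [mul_apply, Fin.sum_univ_two, hM, hN]

theorem fin_two_mul_apply_zero_zero {M N : Mat} (hN : N 1 0 = 0) :
    (M * N) 0 0 = M 0 0 * N 0 0 := by
  simp [mul_apply, Fin.sum_univ_two, hN]

theorem fin_two_mul_apply_one_one {M N : Mat} (hM : M 1 0 = 0) :
    (M * N) 1 1 = M 1 1 * N 1 1 := by
  simp [mul_apply, Fin.sum_univ_two, hM]

variable (A) in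
/-- Over a noncommutative ring an invertible upper triangular matrix may have a non-triangular
inverse, so triangularity of the inverse is required separately. -/
def upperTriangularUnits : Subgroup Matˣ where
  carrier := {U | U.val 1 0 = 0 ∧ U⁻¹.val 1 0 = 0}
  mul_mem' {U V} hU hV := by
    refine ⟨fin_two_mul_apply_one_zero hU.1 hV.1, ?_⟩
    simpa using fin_two_mul_apply_one_zero hV.2 hU.2
  one_mem' := by simp
  inv_mem' hU := ⟨hU.2, by simpa using hU.1⟩

def upperTriangularDiag : upperTriangularUnits A →* Aˣ × Aˣ where
  toFun U :=
    (⟨U.1.val 0 0, U.1⁻¹.val 0 0,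
      by rw [← fin_two_mul_apply_zero_zero U.2.2, Units.mul_inv, one_apply_eq],
      by rw [← fin_two_mul_apply_zero_zero U.2.1, Units.inv_mul, one_apply_eq]⟩,
     ⟨U.1.val 1 1, U.1⁻¹.val 1 1,
      by rw [← fin_two_mul_apply_one_one U.2.1, Units.mul_inv, one_apply_eq],
      by rw [← fin_two_mul_apply_one_one U.2.2, Units.inv_mul, one_apply_eq]⟩)
  map_one' := by ext <;> simp
  map_mul' U V := by
    ext
    · exact fin_two_mul_apply_zero_zero V.2.1
    · exact fin_two_mul_apply_one_one U.2.1

def diagonalUnits : Aˣ × Aˣ →* Matˣ where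
  toFun d := ⟨!![(d.1 : A), 0; 0, d.2], !![↑d.1⁻¹, 0; 0, ↑d.2⁻¹], by simp [one_fin_two],
    by simp [one_fin_two]⟩
  map_one' := by ext : 1; simp [one_fin_two]
  map_mul' _ _ := by ext : 1; simp

theorem mem_upperTriangularUnits {V : Matˣ} {a c : Aˣ} {b : A}
    (hV : V.val = !![(a : A), b; 0, c]) : V ∈ upperTriangularUnits A := by
  refine ⟨by simp [hV], ?_⟩
  have h : (V⁻¹.val * V.val) 1 0 = 0 := by
    rw [← Units.val_mul, inv_mul_cancel, Units.val_one, one_apply_ne (by decide)]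
  simpa [mul_apply, Fin.sum_univ_two, hV] using h

theorem upperTriangularDiag_mk {V : Matˣ} {a c : Aˣ} {b : A}
    (hV : V.val = !![(a : A), b; 0, c]) :
    upperTriangularDiag ⟨V, mem_upperTriangularUnits hV⟩ = (a, c) := by
  ext <;> simp [upperTriangularDiag, hV]

theorem internal_relations_of_commute_diagonalUnits (U : upperTriangularUnits A)
    (hUD : Commute U.1 (diagonalUnits (upperTriangularDiag U)))
    (hd : Commute (upperTriangularDiag U).1 (upperTriangularDiag U).2) :
    U.1.val 0 0 * U.1.val 1 1 = U.1.val 1 1 * U.1.val 0 0 ∧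
      U.1.val 0 0 * U.1.val 0 1 = U.1.val 0 1 * U.1.val 1 1 := by
  refine ⟨by simpa [upperTriangularDiag] using Units.ext_iff.mp hd.eq, ?_⟩
  have h : (U.1.val * (diagonalUnits (upperTriangularDiag U)).val) 0 1 =
      ((diagonalUnits (upperTriangularDiag U)).val * U.1.val) 0 1 := by
    rw [← Units.val_mul, hUD.eq, Units.val_mul]
  simpa [mul_apply, Fin.sum_univ_two, diagonalUnits, upperTriangularDiag] using h.symm

theorem val_diagonalUnits (d : Aˣ × Aˣ) : (diagonalUnits d).val = !![(d.1 : A), 0; 0, d.2] :=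
  rfl

theorem commute_diagonalUnits {V : Matˣ} {a c : Aˣ} {b : A} (hV : V.val = !![(a : A), b; 0, c])
    (hb : (a : A) * b = b * c) : Commute V (diagonalUnits (a, c)) :=
  Units.ext (by simp [hV, diagonalUnits, hb])

variable {k : Type*} [CommSemiring k] [Algebra k A]

theorem upperTriangular_mul_diag_eq_smul {a b c a' c' : A} {r : k} (ha : a * a' = r • (a' * a))
    (hb : b * c' = r • (a' * b)) (hc : c * c' = r • (c' * c)) :
    !![a, b; 0, c] * !![a', 0; 0, c'] = r • (!![a', 0; 0, c'] * !![a, b; 0, c]) := by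
  simp [ha, hb, hc, smul_of]

theorem diag_mul_upperTriangular_eq_smul {a b c a' c' : A} {r : k} (ha : a' * a = r • (a * a'))
    (hb : a' * b = r • (b * c')) (hc : c' * c = r • (c * c')) :
    !![a', 0; 0, c'] * !![a, b; 0, c] = r • (!![a, b; 0, c] * !![a', 0; 0, c']) := by
  simp [ha, hb, hc, smul_of]

end Matrix

open Matrix in
theorem typeII_internal_relations_general {k A : Type*} [Field k] [Ring A] [Algebra k A]
    (q : k) (hq0 : q ≠ 0)
    (α₁ γ₁ α₂ γ₂ : Aˣ) (β₁ β₂ : A)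
    -- internal relations (ID2) and (IND1)
    (hI1 : (α₁ : A) * (γ₁ : A) = (γ₁ : A) * (α₁ : A))
    (hI2 : (α₂ : A) * (γ₂ : A) = (γ₂ : A) * (α₂ : A))
    (hB1 : (α₁ : A) * β₁ = β₁ * (γ₁ : A)) (hB2 : (α₂ : A) * β₂ = β₂ * (γ₂ : A))
    -- mutual relations (MD2) and (MND)
    (hAA : (α₁ : A) * (α₂ : A) = q • ((α₂ : A) * (α₁ : A)))
    (hAC : (α₁ : A) * (γ₂ : A) = q⁻¹ • ((γ₂ : A) * (α₁ : A)))
    (hCA : (α₂ : A) * (γ₁ : A) = q • ((γ₁ : A) * (α₂ : A)))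
    (hCC : (γ₁ : A) * (γ₂ : A) = q • ((γ₂ : A) * (γ₁ : A)))
    (hAB : (α₁ : A) * β₂ = q • (β₂ * (γ₁ : A)))
    (hBC : β₁ * (γ₂ : A) = q • ((α₂ : A) * β₁))
    (V₁ V₂ : (Matrix (Fin 2) (Fin 2) A)ˣ)
    (hV₁ : V₁.val = !![(α₁ : A), β₁; 0, (γ₁ : A)])
    (hV₂ : V₂.val = !![(α₂ : A), β₂; 0, (γ₂ : A)]) :
    ∀ n m : ℤ,
      (V₁ ^ n * V₂ ^ m).val 0 0 *
        (V₁ ^ n * V₂ ^ m).val 1 1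
        = (V₁ ^ n * V₂ ^ m).val 1 1 *
          (V₁ ^ n * V₂ ^ m).val 0 0 ∧
      (V₁ ^ n * V₂ ^ m).val 0 0 *
        (V₁ ^ n * V₂ ^ m).val 0 1
        = (V₁ ^ n * V₂ ^ m).val 0 1 *
          (V₁ ^ n * V₂ ^ m).val 1 1 := by
  intro n m
  let U : upperTriangularUnits A :=
    ⟨V₁, mem_upperTriangularUnits hV₁⟩ ^ n * ⟨V₂, mem_upperTriangularUnits hV₂⟩ ^ m
  have hdiag : upperTriangularDiag U = (α₁, γ₁) ^ n * (α₂, γ₂) ^ m := by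
    simp only [U, map_mul, map_zpow, upperTriangularDiag_mk hV₁, upperTriangularDiag_mk hV₂]
  have hU : U.1 = V₁ ^ n * V₂ ^ m := rfl
  rw [← hU]
  refine internal_relations_of_commute_diagonalUnits U ?_ ?_
  · rw [hdiag, hU, map_mul, map_zpow, map_zpow]
    refine Units.commute_zpow_mul_zpow_of_mul_eq_smul_mul (c := Units.mk0 q hq0)
      (commute_diagonalUnits hV₁ hB1) (commute_diagonalUnits hV₂ hB2) ?_ ?_ n m
    · rw [val_diagonalUnits, hV₂]
      exact diag_mul_upperTriangular_eq_smul hAA hAB hCC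
    · rw [val_diagonalUnits, hV₁]
      exact upperTriangular_mul_diag_eq_smul hAA hBC hCC
  · rw [hdiag, Prod.pow_mk, Prod.pow_mk, Prod.mk_mul_mk]
    refine Units.commute_zpow_mul_zpow_of_mul_eq_smul_mul (c := (Units.mk0 q hq0)⁻¹)
      (Units.ext hI1) (Units.ext hI2) ?_ ?_ n m
    · simp [hCA, smul_smul, hq0]
    · simpa using hAC

/-- Type II pairs: the entries of `U₁ⁿ U₂ᵐ` satisfy
`α(n,m) γ(n,m) = γ(n,m) α(n,m)` and `α(n,m) β(n,m) = β(n,m) γ(n,m)`. -/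
theorem typeII_internal_relations {k A : Type*} [Field k] [CharZero k] [Ring A] [Algebra k A]
    (q : k) (hq0 : q ≠ 0) (hq1 : q ≠ 1)
    (α₁ γ₁ α₂ γ₂ : Aˣ) (β₁ β₂ : A)
    -- internal relations (ID2) and (IND1)
    (hI1 : (α₁ : A) * (γ₁ : A) = (γ₁ : A) * (α₁ : A))
    (hI2 : (α₂ : A) * (γ₂ : A) = (γ₂ : A) * (α₂ : A))
    (hB1 : (α₁ : A) * β₁ = β₁ * (γ₁ : A)) (hB2 : (α₂ : A) * β₂ = β₂ * (γ₂ : A))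
    -- mutual relations (MD2) and (MND)
    (hAA : (α₁ : A) * (α₂ : A) = q • ((α₂ : A) * (α₁ : A)))
    (hAC : (α₁ : A) * (γ₂ : A) = q⁻¹ • ((γ₂ : A) * (α₁ : A)))
    (hCA : (α₂ : A) * (γ₁ : A) = q • ((γ₁ : A) * (α₂ : A)))
    (hCC : (γ₁ : A) * (γ₂ : A) = q • ((γ₂ : A) * (γ₁ : A)))
    (hAB : (α₁ : A) * β₂ = q • (β₂ * (γ₁ : A)))
    (hBC : β₁ * (γ₂ : A) = q • ((α₂ : A) * β₁))
    (V₁ V₂ : (Matrix (Fin 2) (Fin 2) A)ˣ)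
    (hV₁ : V₁.val = !![(α₁ : A), β₁; 0, (γ₁ : A)])
    (hV₂ : V₂.val = !![(α₂ : A), β₂; 0, (γ₂ : A)]) :
    ∀ n m : ℤ,
      (V₁ ^ n * V₂ ^ m).val 0 0 *
        (V₁ ^ n * V₂ ^ m).val 1 1
        = (V₁ ^ n * V₂ ^ m).val 1 1 *
          (V₁ ^ n * V₂ ^ m).val 0 0 ∧
      (V₁ ^ n * V₂ ^ m).val 0 0 *
        (V₁ ^ n * V₂ ^ m).val 0 1
        = (V₁ ^ n * V₂ ^ m).val 0 1 *
          (V₁ ^ n * V₂ ^ m).val 1 1 :=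
  typeII_internal_relations_general q hq0 α₁ γ₁ α₂ γ₂ β₁ β₂ hI1 hI2 hB1 hB2 hAA hAC hCA hCC hAB hBC
    V₁ V₂ hV₁ hV₂
end

section
/- Under type II relations (αᵢγᵢ = γᵢαᵢ, αᵢβᵢ = βᵢγᵢ, α₁α₂ = qα₂α₁, α₁γ₂ = q⁻¹γ₂α₁, α₂γ₁ = qγ₁α₂, γ₁γ₂ = qγ₂γ₁, α₁β₂ = qβ₂γ₁, β₁γ₂ = qα₂β₁), the matrices satisfy (U₁^n U₂^m)(U₁^s U₂^t) = q^{nt - ms} (U₁^s U₂^t)(U₁^n U₂^m) for all integers n, m, s, t. -/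
/-!
The relations say exactly that `U₁ U₂ = q • U₂ U₁` in `M₂(A)`: the diagonal entries are the
`α₁α₂` and `γ₁γ₂` relations and the corner entry is the sum of the `α₁β₂` and `β₁γ₂` relations.
As `q` is a central unit, conjugation by `U₁` multiplies `U₂` by `q`, hence
`U₁ⁿ U₂ᵐ = q^{nm} U₂ᵐ U₁ⁿ`; bringing both products of monomials to the normal form
`q^e U₁^{n+s} U₂^{m+t}` compares the two scalars.
-/

namespace SemiconjBy

variable {G : Type*} [Group G] {Q a b : G}

theorem zpow_right_of_central (hQ : ∀ x, Commute Q x) (h : SemiconjBy a b (Q * b)) (m : ℤ) :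
    SemiconjBy a (b ^ m) (Q ^ m * b ^ m) :=
  (hQ b).mul_zpow m ▸ h.zpow_right m

theorem symm_inv_mul (h : SemiconjBy a b (Q * b)) : SemiconjBy b a (Q⁻¹ * a) :=
  calc b * a = Q⁻¹ * (Q * b * a) := by group
    _ = Q⁻¹ * a * b := by rw [← h.eq, mul_assoc]

theorem zpow_zpow_of_central (hQ : ∀ x, Commute Q x) (h : SemiconjBy a b (Q * b)) (n m : ℤ) :
    SemiconjBy (b ^ m) (a ^ n) (Q ^ (-(n * m)) * a ^ n) := by
  have := (h.zpow_right_of_central hQ m).symm_inv_mul.zpow_right_of_central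
    (fun x => ((hQ x).zpow_left m).inv_left) n
  rwa [← zpow_neg, ← zpow_mul, neg_mul, mul_comm] at this

theorem zpow_mul_zpow_mul_zpow_mul_zpow_of_central (hQ : ∀ x, Commute Q x)
    (h : SemiconjBy a b (Q * b)) (n m s t : ℤ) :
    a ^ n * b ^ m * (a ^ s * b ^ t) = Q ^ (-(s * m)) * (a ^ (n + s) * b ^ (m + t)) :=
  calc a ^ n * b ^ m * (a ^ s * b ^ t) = a ^ n * (b ^ m * a ^ s) * b ^ t := by group
    _ = a ^ n * (Q ^ (-(s * m)) * (a ^ s * b ^ m)) * b ^ t := by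
      rw [(h.zpow_zpow_of_central hQ s m).eq, mul_assoc (Q ^ _)]
    _ = Q ^ (-(s * m)) * (a ^ (n + s) * b ^ (m + t)) := by
      rw [← ((hQ (a ^ n)).zpow_left _).left_comm, zpow_add, zpow_add]; group

theorem zpow_mul_zpow_comm_of_central (hQ : ∀ x, Commute Q x) (h : SemiconjBy a b (Q * b))
    (n m s t : ℤ) :
    a ^ n * b ^ m * (a ^ s * b ^ t) = Q ^ (n * t - m * s) * (a ^ s * b ^ t * (a ^ n * b ^ m)) := by
  rw [h.zpow_mul_zpow_mul_zpow_mul_zpow_of_central hQ,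
    h.zpow_mul_zpow_mul_zpow_mul_zpow_of_central hQ, ← mul_assoc (Q ^ (n * t - m * s)),
    ← zpow_add, add_comm s, add_comm t]
  congr 2
  ring

end SemiconjBy

theorem Units.zpow_mul_zpow_comm_of_mul_eq_smul {k M : Type*} [Semifield k] [Semiring M]
    [Algebra k M] {q : k} (hq : q ≠ 0) {u v : Mˣ} (h : (u : M) * v = q • ((v : M) * u))
    (n m s t : ℤ) :
    ((u ^ n * v ^ m : Mˣ) : M) * (u ^ s * v ^ t : Mˣ) =
      q ^ (n * t - m * s) • (((u ^ s * v ^ t : Mˣ) : M) * (u ^ n * v ^ m : Mˣ)) := by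
  let Q : Mˣ := Units.map (algebraMap k M : k →* M) (Units.mk0 q hq)
  have hQ : ∀ x, Commute Q x := fun x => Units.ext (Algebra.commutes q (x : M))
  have hQ_zpow (e : ℤ) : ((Q ^ e : Mˣ) : M) = algebraMap k M (q ^ e) := by
    rw [← map_zpow, Units.coe_map, Units.val_zpow_eq_zpow_val]
    rfl
  have huv : SemiconjBy u v (Q * v) := Units.ext <| by
    rw [Units.val_mul, Units.val_mul, h, Algebra.smul_def, ← mul_assoc]
    rfl
  rw [← Units.val_mul, huv.zpow_mul_zpow_comm_of_central hQ, Units.val_mul, hQ_zpow,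
    ← Algebra.smul_def, Units.val_mul]

theorem Matrix.fin_two_upper_mul_eq_smul_mul {k A : Type*} [CommSemiring k] [Semiring A]
    [Algebra k A] {q : k} {α₁ β₁ γ₁ α₂ β₂ γ₂ : A}
    (hAA : α₁ * α₂ = q • (α₂ * α₁)) (hAB : α₁ * β₂ = q • (β₂ * γ₁)) (hBC : β₁ * γ₂ = q • (α₂ * β₁))
    (hCC : γ₁ * γ₂ = q • (γ₂ * γ₁)) :
    !![α₁, β₁; 0, γ₁] * !![α₂, β₂; 0, γ₂] = q • (!![α₂, β₂; 0, γ₂] * !![α₁, β₁; 0, γ₁]) := by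
  rw [Matrix.mul_fin_two, Matrix.mul_fin_two]
  ext i j
  fin_cases i <;> fin_cases j <;> simp [hAA, hAB, hBC, hCC, smul_add, add_comm]

theorem typeII_monomials_q_commute_general {k A : Type*} [Field k] [Ring A] [Algebra k A]
    (q : k) (hq0 : q ≠ 0)
    (α₁ γ₁ α₂ γ₂ : Aˣ) (β₁ β₂ : A)
    (hAA : (α₁ : A) * (α₂ : A) = q • ((α₂ : A) * (α₁ : A)))
    (hCC : (γ₁ : A) * (γ₂ : A) = q • ((γ₂ : A) * (γ₁ : A)))
    (hAB : (α₁ : A) * β₂ = q • (β₂ * (γ₁ : A)))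
    (hBC : β₁ * (γ₂ : A) = q • ((α₂ : A) * β₁))
    (V₁ V₂ : (Matrix (Fin 2) (Fin 2) A)ˣ)
    (hV₁ : V₁.val = !![(α₁ : A), β₁; 0, (γ₁ : A)])
    (hV₂ : V₂.val = !![(α₂ : A), β₂; 0, (γ₂ : A)]) :
    ∀ n m s t : ℤ,
      (V₁ ^ n * V₂ ^ m).val *
        (V₁ ^ s * V₂ ^ t).val
      = q ^ (n * t - m * s) •
        ((V₁ ^ s * V₂ ^ t).val *
          (V₁ ^ n * V₂ ^ m).val) :=
  Units.zpow_mul_zpow_comm_of_mul_eq_smul hq0 <| by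
    rw [hV₁, hV₂]
    exact Matrix.fin_two_upper_mul_eq_smul_mul hAA hAB hBC hCC

/-- Under type II relations, `(U₁ⁿU₂ᵐ)(U₁ˢU₂ᵗ) = q^{nt-ms} (U₁ˢU₂ᵗ)(U₁ⁿU₂ᵐ)`. -/
theorem typeII_monomials_q_commute {k A : Type*} [Field k] [CharZero k] [Ring A] [Algebra k A]
    (q : k) (hq0 : q ≠ 0)
    (α₁ γ₁ α₂ γ₂ : Aˣ) (β₁ β₂ : A)
    (hI1 : (α₁ : A) * (γ₁ : A) = (γ₁ : A) * (α₁ : A))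
    (hI2 : (α₂ : A) * (γ₂ : A) = (γ₂ : A) * (α₂ : A))
    (hB1 : (α₁ : A) * β₁ = β₁ * (γ₁ : A)) (hB2 : (α₂ : A) * β₂ = β₂ * (γ₂ : A))
    (hAA : (α₁ : A) * (α₂ : A) = q • ((α₂ : A) * (α₁ : A)))
    (hAC : (α₁ : A) * (γ₂ : A) = q⁻¹ • ((γ₂ : A) * (α₁ : A)))
    (hCA : (α₂ : A) * (γ₁ : A) = q • ((γ₁ : A) * (α₂ : A)))
    (hCC : (γ₁ : A) * (γ₂ : A) = q • ((γ₂ : A) * (γ₁ : A)))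
    (hAB : (α₁ : A) * β₂ = q • (β₂ * (γ₁ : A)))
    (hBC : β₁ * (γ₂ : A) = q • ((α₂ : A) * β₁))
    (V₁ V₂ : (Matrix (Fin 2) (Fin 2) A)ˣ)
    (hV₁ : V₁.val = !![(α₁ : A), β₁; 0, (γ₁ : A)])
    (hV₂ : V₂.val = !![(α₂ : A), β₂; 0, (γ₂ : A)]) :
    ∀ n m s t : ℤ,
      (V₁ ^ n * V₂ ^ m).val *
        (V₁ ^ s * V₂ ^ t).val
      = q ^ (n * t - m * s) •
        ((V₁ ^ s * V₂ ^ t).val *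
          (V₁ ^ n * V₂ ^ m).val) :=
  typeII_monomials_q_commute_general q hq0 α₁ γ₁ α₂ γ₂ β₁ β₂ hAA hCC hAB hBC V₁ V₂ hV₁ hV₂
end

section
/- If (U₁, U₂) is a type II quantum matrix pair with parameter q, then (U₁^n U₂^m, U₁^s U₂^t) is a type II quantum matrix pair with parameter q^{nt-ms}, i.e., both product matrices satisfy the type II internal relations and the six mutual relations with q replaced by q^{nt-ms}, for all integers n, m, s, t. -/
/-- The type II relations for a pair of triples of entries, with parameter `q`:
internal relations (ID2), (IND1) and mutual relations (MD2), (MND). -/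
def TypeIIRel {k A : Type*} [Field k] [Ring A] [Algebra k A] (q : k)
    (a1 b1 c1 a2 b2 c2 : A) : Prop :=
  a1 * c1 = c1 * a1 ∧ a2 * c2 = c2 * a2 ∧
  a1 * b1 = b1 * c1 ∧ a2 * b2 = b2 * c2 ∧
  a1 * a2 = q • (a2 * a1) ∧ a1 * c2 = q⁻¹ • (c2 * a1) ∧
  a2 * c1 = q • (c1 * a2) ∧ c1 * c2 = q • (c2 * c1) ∧
  a1 * b2 = q • (b2 * c1) ∧ b1 * c2 = q • (a2 * b1)

section Aux

variable {k A : Type*} [Field k] [Ring A] [Algebra k A]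

/-- The six mutual relations with parameter `p`. -/
def Mut (p : k) (a1 b1 c1 a2 b2 c2 : A) : Prop :=
  a1 * a2 = p • (a2 * a1) ∧ a1 * c2 = p⁻¹ • (c2 * a1) ∧
  a2 * c1 = p • (c1 * a2) ∧ c1 * c2 = p • (c2 * c1) ∧
  a1 * b2 = p • (b2 * c1) ∧ b1 * c2 = p • (a2 * b1)

/-- The internal relations of a triple. -/
def Intl (a b c : A) : Prop := a * c = c * a ∧ a * b = b * c

lemma shiftR {p : k} {x y z w : A} (h : x * y = p • (z * w)) (v : A) :
    x * (y * v) = p • (z * (w * v)) := by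
  rw [← mul_assoc, h, smul_mul_assoc, mul_assoc]

lemma reorient {p : k} (hp : p ≠ 0) {x y : A} (h : x = p • y) :
    y = p⁻¹ • x := by rw [h, inv_smul_smul₀ hp]

lemma inv_swap_right {p : k} {x : A} {u : Aˣ} (hp : p ≠ 0)
    (h : x * ↑u = p • ((↑u : A) * x)) :
    x * ↑u⁻¹ = p⁻¹ • ((↑u⁻¹ : A) * x) := by
  have h2 : (↑u⁻¹ : A) * x = p • (x * ↑u⁻¹) := by
    calc (↑u⁻¹ : A) * x = ↑u⁻¹ * (x * ↑u) * ↑u⁻¹ := by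
          rw [mul_assoc, Units.mul_inv_cancel_right]
    _ = ↑u⁻¹ * (p • ((↑u : A) * x)) * ↑u⁻¹ := by rw [h]
    _ = p • (x * ↑u⁻¹) := by
          rw [mul_smul_comm, smul_mul_assoc, Units.inv_mul_cancel_left]
  rw [h2, inv_smul_smul₀ hp]

lemma inv_swap_left {p : k} {x : A} {u : Aˣ} (hp : p ≠ 0)
    (h : (↑u : A) * x = p • (x * ↑u)) :
    (↑u⁻¹ : A) * x = p⁻¹ • (x * ↑u⁻¹) := by
  have h2 : x * (↑u⁻¹ : A) = p • ((↑u⁻¹ : A) * x) := by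
    calc x * (↑u⁻¹ : A) = ↑u⁻¹ * ((↑u : A) * x) * ↑u⁻¹ := by
          rw [Units.inv_mul_cancel_left]
    _ = ↑u⁻¹ * (p • (x * ↑u)) * ↑u⁻¹ := by rw [h]
    _ = p • ((↑u⁻¹ : A) * x) := by
          rw [mul_smul_comm, smul_mul_assoc, mul_assoc, Units.mul_inv_cancel_right]
  rw [h2, inv_smul_smul₀ hp]

lemma inv_swap_two {p : k} {x : A} {u v : Aˣ} (hp : p ≠ 0)
    (h : x * ↑v = p • ((↑u : A) * x)) :
    x * ↑v⁻¹ = p⁻¹ • ((↑u⁻¹ : A) * x) := by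
  have h2 : (↑u⁻¹ : A) * x = p • (x * ↑v⁻¹) := by
    calc (↑u⁻¹ : A) * x = ↑u⁻¹ * (x * ↑v) * ↑v⁻¹ := by
          rw [mul_assoc, Units.mul_inv_cancel_right]
    _ = ↑u⁻¹ * (p • ((↑u : A) * x)) * ↑v⁻¹ := by rw [h]
    _ = p • (x * ↑v⁻¹) := by
          rw [mul_smul_comm, smul_mul_assoc, Units.inv_mul_cancel_left]
  rw [h2, inv_smul_smul₀ hp]

lemma mut_one (a1 b1 c1 : A) : Mut (1 : k) a1 b1 c1 1 0 1 := by
  simp [Mut]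

lemma mut_self {a b c : A} (h : Intl a b c) : Mut (1 : k) a b c a b c := by
  obtain ⟨h1, h2⟩ := h
  refine ⟨by simp, by simp [h1], by simp [h1], by simp, by simp [h2], by simp [h2]⟩

lemma mut_symm {p : k} (hp : p ≠ 0) {a1 b1 c1 a2 b2 c2 : A}
    (h : Mut p a1 b1 c1 a2 b2 c2) : Mut p⁻¹ a2 b2 c2 a1 b1 c1 := by
  obtain ⟨h1, h2, h3, h4, h5, h6⟩ := h
  exact ⟨reorient hp h1, by rw [inv_inv]; exact h3, h2, reorient hp h4,
    reorient hp h6, reorient hp h5⟩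

lemma mut_mul {p p' : k} {a1 b1 c1 ay by' cy az bz cz : A}
    (hY : Mut p a1 b1 c1 ay by' cy) (hZ : Mut p' a1 b1 c1 az bz cz) :
    Mut (p * p') a1 b1 c1 (ay * az) (ay * bz + by' * cz) (cy * cz) := by
  obtain ⟨y1, y2, y3, y4, y5, y6⟩ := hY
  obtain ⟨z1, z2, z3, z4, z5, z6⟩ := hZ
  refine ⟨?_, ?_, ?_, ?_, ?_, ?_⟩
  · simp only [mul_assoc, shiftR y1, z1, mul_smul_comm, smul_smul]
  · simp only [mul_assoc, shiftR y2, z2, mul_smul_comm, smul_smul]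
    match_scalars; ring
  · simp only [mul_assoc, z3, shiftR y3, mul_smul_comm, smul_smul]
    match_scalars; ring
  · simp only [mul_assoc, shiftR y4, z4, mul_smul_comm, smul_smul]
  · simp only [mul_add, add_mul, mul_assoc, shiftR y1, z5, shiftR y5, z4,
      mul_smul_comm, smul_smul, smul_add]
  · simp only [mul_assoc, shiftR y6, z6, mul_smul_comm, smul_smul]

lemma mut_inv {p : k} (hp : p ≠ 0) {a1 b1 c1 b2 : A} {u v : Aˣ}
    (h : Mut p a1 b1 c1 ↑u b2 ↑v) :
    Mut p⁻¹ a1 b1 c1 ↑u⁻¹ (-((↑u⁻¹ : A) * b2 * ↑v⁻¹)) ↑v⁻¹ := by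
  obtain ⟨h1, h2, h3, h4, h5, h6⟩ := h
  have i1 : a1 * ↑u⁻¹ = p⁻¹ • ((↑u⁻¹ : A) * a1) := inv_swap_right hp h1
  have i2 : a1 * ↑v⁻¹ = p • ((↑v⁻¹ : A) * a1) := by
    have := inv_swap_right (inv_ne_zero hp) h2
    rwa [inv_inv] at this
  have i3 : (↑u⁻¹ : A) * c1 = p⁻¹ • (c1 * ↑u⁻¹) := inv_swap_left hp h3
  have i4 : c1 * ↑v⁻¹ = p⁻¹ • ((↑v⁻¹ : A) * c1) := inv_swap_right hp h4
  have i6 : b1 * ↑v⁻¹ = p⁻¹ • ((↑u⁻¹ : A) * b1) := inv_swap_two hp h6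
  refine ⟨i1, by rw [inv_inv]; exact i2, i3, i4, ?_, i6⟩
  · -- a1 * -(u⁻¹ b v⁻¹) = p⁻¹ • (-(u⁻¹ b v⁻¹) * c1)
    simp only [mul_neg, neg_mul, smul_neg, mul_assoc, shiftR i1, shiftR h5, i4,
      mul_smul_comm, smul_smul]
    match_scalars; field_simp

lemma intl_mul {p : k} (hp : p ≠ 0) {ay by' cy az bz cz : A}
    (hY : Intl ay by' cy) (hZ : Intl az bz cz)
    (h : Mut p ay by' cy az bz cz) :
    Intl (ay * az) (ay * bz + by' * cz) (cy * cz) := by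
  obtain ⟨iy1, iy2⟩ := hY
  obtain ⟨iz1, iz2⟩ := hZ
  obtain ⟨h1, h2, h3, h4, h5, h6⟩ := h
  have hyc : ay * cy = (1 : k) • (cy * ay) := by rw [iy1, one_smul]
  have hyb : ay * by' = (1 : k) • (by' * cy) := by rw [iy2, one_smul]
  constructor
  · calc ay * az * (cy * cz)
        = ay * (az * (cy * cz)) := by rw [mul_assoc]
      _ = p • (ay * (cy * (az * cz))) := by rw [shiftR h3, mul_smul_comm]
      _ = p • (cy * (ay * (az * cz))) := by rw [shiftR hyc, one_smul]
      _ = p • (cy * (ay * (cz * az))) := by rw [iz1]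
      _ = p • (p⁻¹ • (cy * (cz * (ay * az)))) := by rw [shiftR h2, mul_smul_comm]
      _ = cy * cz * (ay * az) := by
          rw [smul_smul, mul_inv_cancel₀ hp, one_smul, mul_assoc]
  · have e6 : az * (by' * cz) = p⁻¹ • (by' * (cz * cz)) := shiftR (reorient hp h6) _
    have e5 : bz * (cy * cz) = p⁻¹ • (ay * (bz * cz)) := shiftR (reorient hp h5) _
    have e4 : cz * (cy * cz) = p⁻¹ • (cy * (cz * cz)) := shiftR (reorient hp h4) _
    calc ay * az * (ay * bz + by' * cz)
        = ay * (az * (ay * bz)) + ay * (az * (by' * cz)) := by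
          rw [mul_add, mul_assoc, mul_assoc]
      _ = p⁻¹ • (ay * (ay * (az * bz))) + p⁻¹ • (ay * (by' * (cz * cz))) := by
          rw [shiftR (reorient hp h1), e6, mul_smul_comm, mul_smul_comm]
      _ = p⁻¹ • (ay * (ay * (bz * cz))) + p⁻¹ • (by' * (cy * (cz * cz))) := by
          rw [iz2, shiftR hyb, one_smul]
      _ = ay * (bz * (cy * cz)) + by' * (cz * (cy * cz)) := by
          rw [e5, e4, mul_smul_comm, mul_smul_comm]
      _ = (ay * bz + by' * cz) * (cy * cz) := by
          rw [add_mul, mul_assoc, mul_assoc]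

lemma intl_one : Intl (1 : A) 0 1 := by simp [Intl]

lemma intl_inv {b : A} {u v : Aˣ} (h : Intl (↑u : A) b ↑v) :
    Intl (↑u⁻¹ : A) (-((↑u⁻¹ : A) * b * ↑v⁻¹)) ↑v⁻¹ := by
  obtain ⟨h1, h2⟩ := h
  have key : (↑u⁻¹ : A) * b = b * ↑v⁻¹ := by
    calc (↑u⁻¹ : A) * b = ↑u⁻¹ * (b * ↑v) * ↑v⁻¹ := by
          rw [mul_assoc, Units.mul_inv_cancel_right]
    _ = ↑u⁻¹ * ((↑u : A) * b) * ↑v⁻¹ := by rw [← h2]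
    _ = b * ↑v⁻¹ := by rw [Units.inv_mul_cancel_left]
  constructor
  · -- u⁻¹ v⁻¹ = v⁻¹ u⁻¹
    have huv : u * v = v * u := Units.ext (by exact_mod_cast h1)
    have : (u * v)⁻¹ = (v * u)⁻¹ := by rw [huv]
    rw [mul_inv_rev, mul_inv_rev] at this
    exact_mod_cast congrArg (Units.val) this.symm
  · have key' : ∀ w : A, (↑u⁻¹ : A) * (b * w) = b * (↑v⁻¹ * w) := by
      intro w; rw [← mul_assoc, key, mul_assoc]
    simp only [mul_neg, neg_mul, neg_inj, mul_assoc]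
    rw [key']

/-! ### Matrix layer -/

/-- Upper triangular with prescribed unit diagonal. -/
def UT (V : (Matrix (Fin 2) (Fin 2) A)ˣ) (a c : Aˣ) : Prop :=
  V.val 0 0 = ↑a ∧ V.val 1 0 = 0 ∧ V.val 1 1 = ↑c

def MutM (p : k) (V W : (Matrix (Fin 2) (Fin 2) A)ˣ) : Prop :=
  Mut p (V.val 0 0) (V.val 0 1) (V.val 1 1) (W.val 0 0) (W.val 0 1) (W.val 1 1)

def IntlM (V : (Matrix (Fin 2) (Fin 2) A)ˣ) : Prop :=
  Intl (V.val 0 0) (V.val 0 1) (V.val 1 1)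

variable {V W Y Z : (Matrix (Fin 2) (Fin 2) A)ˣ}

lemma mul00 (hZ : Z.val 1 0 = 0) :
    (Y * Z).val 0 0 = Y.val 0 0 * Z.val 0 0 := by
  rw [Units.val_mul, Matrix.mul_apply, Fin.sum_univ_two, hZ, mul_zero, add_zero]

lemma mul01 : (Y * Z).val 0 1 = Y.val 0 0 * Z.val 0 1 + Y.val 0 1 * Z.val 1 1 := by
  rw [Units.val_mul, Matrix.mul_apply, Fin.sum_univ_two]

lemma mul11 (hY : Y.val 1 0 = 0) :
    (Y * Z).val 1 1 = Y.val 1 1 * Z.val 1 1 := by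
  rw [Units.val_mul, Matrix.mul_apply, Fin.sum_univ_two, hY, zero_mul, zero_add]

lemma ut_mul {ay cy az cz : Aˣ} (hY : UT Y ay cy) (hZ : UT Z az cz) :
    UT (Y * Z) (ay * az) (cy * cz) := by
  refine ⟨?_, ?_, ?_⟩
  · rw [mul00 hZ.2.1, hY.1, hZ.1, Units.val_mul]
  · rw [Units.val_mul, Matrix.mul_apply, Fin.sum_univ_two, hY.2.1, hZ.2.1,
      zero_mul, mul_zero, add_zero]
  · rw [mul11 hY.2.1, hY.2.2, hZ.2.2, Units.val_mul]

lemma ut_one : UT (1 : (Matrix (Fin 2) (Fin 2) A)ˣ) 1 1 := by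
  refine ⟨?_, ?_, ?_⟩ <;> simp [Units.val_one, Matrix.one_apply]

lemma inv_val {a c : Aˣ} (h : UT V a c) :
    (V⁻¹).val = !![(↑a⁻¹ : A), -((↑a⁻¹ : A) * V.val 0 1 * ↑c⁻¹); 0, ↑c⁻¹] := by
  have hV : V.val = !![(↑a : A), V.val 0 1; 0, ↑c] := by
    conv_lhs => rw [Matrix.eta_fin_two V.val]
    rw [h.1, h.2.1, h.2.2]
  have hmul : V.val * !![(↑a⁻¹ : A), -((↑a⁻¹ : A) * V.val 0 1 * ↑c⁻¹); 0, ↑c⁻¹] = 1 := by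
    rw [hV]
    ext i j
    fin_cases i <;> fin_cases j <;>
      simp [Matrix.mul_apply, Fin.sum_univ_two, Matrix.one_apply, mul_assoc]
  calc (V⁻¹).val = (V⁻¹).val * (V.val *
        !![(↑a⁻¹ : A), -((↑a⁻¹ : A) * V.val 0 1 * ↑c⁻¹); 0, ↑c⁻¹]) := by
        rw [hmul, mul_one]
    _ = ((V⁻¹).val * V.val) *
        !![(↑a⁻¹ : A), -((↑a⁻¹ : A) * V.val 0 1 * ↑c⁻¹); 0, ↑c⁻¹] :=
        (mul_assoc _ _ _).symm
    _ = _ := by rw [← Units.val_mul, inv_mul_cancel V, Units.val_one, one_mul]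

lemma ut_inv {a c : Aˣ} (h : UT V a c) : UT V⁻¹ a⁻¹ c⁻¹ := by
  refine ⟨?_, ?_, ?_⟩ <;> rw [inv_val h] <;> simp

lemma inv01 {a c : Aˣ} (h : UT V a c) :
    (V⁻¹).val 0 1 = -((↑a⁻¹ : A) * V.val 0 1 * ↑c⁻¹) := by
  rw [inv_val h]; simp

lemma ut_pow {a c : Aˣ} (h : UT V a c) : ∀ n : ℕ, UT (V ^ n) (a ^ n) (c ^ n)
  | 0 => by simpa using ut_one
  | (n + 1) => by
      rw [pow_succ, pow_succ, pow_succ]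
      exact ut_mul (ut_pow h n) h

lemma ut_zpow {a c : Aˣ} (h : UT V a c) : ∀ z : ℤ, UT (V ^ z) (a ^ z) (c ^ z)
  | Int.ofNat n => by simpa [zpow_natCast] using ut_pow h n
  | Int.negSucc n => by
      rw [zpow_negSucc, zpow_negSucc, zpow_negSucc]
      exact ut_inv (ut_pow h (n + 1))

lemma mutM_mul {p p' : k} {ay cy az cz : Aˣ} (hY : UT Y ay cy) (hZ : UT Z az cz)
    (h1 : MutM p V Y) (h2 : MutM p' V Z) : MutM (p * p') V (Y * Z) := by
  unfold MutM at *
  rw [mul00 hZ.2.1, mul01, mul11 hY.2.1]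
  exact mut_mul h1 h2

lemma mutM_one : MutM (1 : k) V 1 := by
  unfold MutM
  have h0 : (1 : (Matrix (Fin 2) (Fin 2) A)ˣ).val 0 0 = 1 := by
    simp [Units.val_one, Matrix.one_apply]
  have h1 : (1 : (Matrix (Fin 2) (Fin 2) A)ˣ).val 0 1 = 0 := by
    simp [Units.val_one, Matrix.one_apply]
  have h2 : (1 : (Matrix (Fin 2) (Fin 2) A)ˣ).val 1 1 = 1 := by
    simp [Units.val_one, Matrix.one_apply]
  rw [h0, h1, h2]
  exact mut_one _ _ _

lemma mutM_inv {p : k} {a c : Aˣ} (hp : p ≠ 0) (hY : UT Y a c)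
    (h : MutM p V Y) : MutM p⁻¹ V Y⁻¹ := by
  unfold MutM at *
  rw [hY.1, hY.2.2] at h
  rw [(ut_inv hY).1, (ut_inv hY).2.2, inv01 hY]
  exact mut_inv hp h

lemma mutM_symm {p : k} (hp : p ≠ 0) (h : MutM p V Y) : MutM p⁻¹ Y V :=
  mut_symm hp h

lemma mutM_pow {p : k} {a c : Aˣ} (hp : p ≠ 0) (hY : UT Y a c)
    (h : MutM p V Y) : ∀ n : ℕ, MutM (p ^ n) V (Y ^ n)
  | 0 => by rw [pow_zero, pow_zero]; exact mutM_one
  | (n + 1) => by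
      rw [pow_succ, pow_succ]
      exact mutM_mul (ut_pow hY n) hY (mutM_pow hp hY h n) h

lemma mutM_zpow {p : k} {a c : Aˣ} (hp : p ≠ 0) (hY : UT Y a c)
    (h : MutM p V Y) : ∀ z : ℤ, MutM (p ^ z) V (Y ^ z)
  | Int.ofNat n => by
      rw [Int.ofNat_eq_coe, zpow_natCast, zpow_natCast]
      exact mutM_pow hp hY h n
  | Int.negSucc n => by
      rw [zpow_negSucc, zpow_negSucc]
      exact mutM_inv (pow_ne_zero _ hp) (ut_pow hY (n + 1)) (mutM_pow hp hY h (n + 1))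

lemma intlM_mul {p : k} {ay cy az cz : Aˣ} (hp : p ≠ 0)
    (hY : UT Y ay cy) (hZ : UT Z az cz)
    (iY : IntlM Y) (iZ : IntlM Z) (h : MutM p Y Z) : IntlM (Y * Z) := by
  unfold IntlM at *
  rw [mul00 hZ.2.1, mul01, mul11 hY.2.1]
  exact intl_mul hp iY iZ h

lemma intlM_inv {a c : Aˣ} (hY : UT Y a c) (iY : IntlM Y) : IntlM Y⁻¹ := by
  unfold IntlM at *
  rw [hY.1, hY.2.2] at iY
  rw [(ut_inv hY).1, (ut_inv hY).2.2, inv01 hY]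
  exact intl_inv iY

lemma intlM_one : IntlM (1 : (Matrix (Fin 2) (Fin 2) A)ˣ) := by
  unfold IntlM
  rw [ut_one.1, ut_one.2.2]
  have h1 : (1 : (Matrix (Fin 2) (Fin 2) A)ˣ).val 0 1 = 0 := by
    simp [Units.val_one, Matrix.one_apply]
  rw [h1, Units.val_one]
  exact intl_one

lemma intlM_pow (K : Type*) [Field K] [Algebra K A] {a c : Aˣ}
    (hY : UT Y a c) (iY : IntlM Y) :
    ∀ n : ℕ, IntlM (Y ^ n)
  | 0 => by rw [pow_zero]; exact intlM_one
  | (n + 1) => by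
      rw [pow_succ]
      have hself : MutM (1 : K) Y Y := mut_self iY
      have h1 : MutM ((1 : K) ^ n) Y (Y ^ n) := mutM_pow one_ne_zero hY hself n
      rw [one_pow] at h1
      have h2 : MutM ((1 : K)⁻¹) (Y ^ n) Y := mutM_symm one_ne_zero h1
      exact intlM_mul (by rw [inv_one]; exact (one_ne_zero : (1 : K) ≠ 0))
        (ut_pow hY n) hY (intlM_pow K hY iY n) iY h2

lemma intlM_zpow (K : Type*) [Field K] [Algebra K A] {a c : Aˣ}
    (hY : UT Y a c) (iY : IntlM Y) :
    ∀ z : ℤ, IntlM (Y ^ z)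
  | Int.ofNat n => by rw [Int.ofNat_eq_coe, zpow_natCast]; exact intlM_pow K hY iY n
  | Int.negSucc n => by
      rw [zpow_negSucc]
      exact intlM_inv (ut_pow hY (n + 1)) (intlM_pow K hY iY (n + 1))

end Aux

/-- If `(U₁, U₂)` is a type II quantum matrix pair with parameter `q`, then
`(U₁ⁿU₂ᵐ, U₁ˢU₂ᵗ)` is a type II quantum matrix pair with parameter `q^{nt-ms}`. -/
theorem typeII_new_pairs {k A : Type*} [Field k] [CharZero k] [Ring A] [Algebra k A]
    (q : k) (hq0 : q ≠ 0)
    (α₁ γ₁ α₂ γ₂ : Aˣ) (β₁ β₂ : A)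
    (hrel : TypeIIRel q (α₁ : A) β₁ (γ₁ : A) (α₂ : A) β₂ (γ₂ : A))
    (V₁ V₂ : (Matrix (Fin 2) (Fin 2) A)ˣ)
    (hV₁ : V₁.val = !![(α₁ : A), β₁; 0, (γ₁ : A)])
    (hV₂ : V₂.val = !![(α₂ : A), β₂; 0, (γ₂ : A)]) :
    ∀ n m s t : ℤ,
      TypeIIRel (q ^ (n * t - m * s))
        ((V₁ ^ n * V₂ ^ m).val 0 0)
        ((V₁ ^ n * V₂ ^ m).val 0 1)
        ((V₁ ^ n * V₂ ^ m).val 1 1)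
        ((V₁ ^ s * V₂ ^ t).val 0 0)
        ((V₁ ^ s * V₂ ^ t).val 0 1)
        ((V₁ ^ s * V₂ ^ t).val 1 1) := by
  have ut1 : UT V₁ α₁ γ₁ := ⟨by simp [hV₁], by simp [hV₁], by simp [hV₁]⟩
  have ut2 : UT V₂ α₂ γ₂ := ⟨by simp [hV₂], by simp [hV₂], by simp [hV₂]⟩
  obtain ⟨r1, r2, r3, r4, rm⟩ := hrel
  have hI1 : IntlM V₁ := by
    unfold IntlM; rw [ut1.1, ut1.2.2]
    have : V₁.val 0 1 = β₁ := by simp [hV₁]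
    rw [this]; exact ⟨r1, r3⟩
  have hI2 : IntlM V₂ := by
    unfold IntlM; rw [ut2.1, ut2.2.2]
    have : V₂.val 0 1 = β₂ := by simp [hV₂]
    rw [this]; exact ⟨r2, r4⟩
  have hM12 : MutM q V₁ V₂ := by
    unfold MutM
    rw [ut1.1, ut1.2.2, ut2.1, ut2.2.2,
      (by simp [hV₁] : V₁.val 0 1 = β₁), (by simp [hV₂] : V₂.val 0 1 = β₂)]
    exact rm
  have hM11 : MutM (1 : k) V₁ V₁ := mut_self hI1
  have hM22 : MutM (1 : k) V₂ V₂ := mut_self hI2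
  have hM21 : MutM q⁻¹ V₂ V₁ := mutM_symm hq0 hM12
  intro n m s t
  -- `IntlM` of the two products
  have hPairNM : ∀ a b : ℤ, IntlM (V₁ ^ a * V₂ ^ b) := by
    intro a b
    have d1 : MutM (q ^ b) V₁ (V₂ ^ b) := mutM_zpow hq0 ut2 hM12 b
    have d2 : MutM ((q ^ b)⁻¹) (V₂ ^ b) V₁ := mutM_symm (zpow_ne_zero _ hq0) d1
    have d3 : MutM ((q ^ b)⁻¹ ^ a) (V₂ ^ b) (V₁ ^ a) :=
      mutM_zpow (inv_ne_zero (zpow_ne_zero _ hq0)) ut1 d2 a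
    have d4 : MutM (((q ^ b)⁻¹ ^ a)⁻¹) (V₁ ^ a) (V₂ ^ b) :=
      mutM_symm (zpow_ne_zero _ (inv_ne_zero (zpow_ne_zero _ hq0))) d3
    exact intlM_mul (inv_ne_zero (zpow_ne_zero _ (inv_ne_zero (zpow_ne_zero _ hq0))))
      (ut_zpow ut1 a) (ut_zpow ut2 b)
      (intlM_zpow k ut1 hI1 a) (intlM_zpow k ut2 hI2 b) d4
  have hIP : IntlM (V₁ ^ n * V₂ ^ m) := hPairNM n m
  have hIQ : IntlM (V₁ ^ s * V₂ ^ t) := hPairNM s t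
  -- the mutual relations between the two products
  have a1 : MutM ((1 : k) ^ s) V₁ (V₁ ^ s) := mutM_zpow one_ne_zero ut1 hM11 s
  have a2 : MutM (q ^ t) V₁ (V₂ ^ t) := mutM_zpow hq0 ut2 hM12 t
  have a3 : MutM ((1 : k) ^ s * q ^ t) V₁ (V₁ ^ s * V₂ ^ t) :=
    mutM_mul (ut_zpow ut1 s) (ut_zpow ut2 t) a1 a2
  have b1 : MutM (q⁻¹ ^ s) V₂ (V₁ ^ s) := mutM_zpow (inv_ne_zero hq0) ut1 hM21 s
  have b2 : MutM ((1 : k) ^ t) V₂ (V₂ ^ t) := mutM_zpow one_ne_zero ut2 hM22 t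
  have b3 : MutM (q⁻¹ ^ s * (1 : k) ^ t) V₂ (V₁ ^ s * V₂ ^ t) :=
    mutM_mul (ut_zpow ut1 s) (ut_zpow ut2 t) b1 b2
  have hqa : ((1 : k) ^ s * q ^ t) ≠ 0 :=
    mul_ne_zero (zpow_ne_zero _ one_ne_zero) (zpow_ne_zero _ hq0)
  have hqb : (q⁻¹ ^ s * (1 : k) ^ t) ≠ 0 :=
    mul_ne_zero (zpow_ne_zero _ (inv_ne_zero hq0)) (zpow_ne_zero _ one_ne_zero)
  have c1 : MutM (((1 : k) ^ s * q ^ t)⁻¹) (V₁ ^ s * V₂ ^ t) V₁ := mutM_symm hqa a3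
  have c2 : MutM (((1 : k) ^ s * q ^ t)⁻¹ ^ n) (V₁ ^ s * V₂ ^ t) (V₁ ^ n) :=
    mutM_zpow (inv_ne_zero hqa) ut1 c1 n
  have d1 : MutM ((q⁻¹ ^ s * (1 : k) ^ t)⁻¹) (V₁ ^ s * V₂ ^ t) V₂ := mutM_symm hqb b3
  have d2 : MutM ((q⁻¹ ^ s * (1 : k) ^ t)⁻¹ ^ m) (V₁ ^ s * V₂ ^ t) (V₂ ^ m) :=
    mutM_zpow (inv_ne_zero hqb) ut2 d1 m
  have e1 : MutM (((1 : k) ^ s * q ^ t)⁻¹ ^ n * (q⁻¹ ^ s * (1 : k) ^ t)⁻¹ ^ m)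
      (V₁ ^ s * V₂ ^ t) (V₁ ^ n * V₂ ^ m) :=
    mutM_mul (ut_zpow ut1 n) (ut_zpow ut2 m) c2 d2
  have hne : (((1 : k) ^ s * q ^ t)⁻¹ ^ n * (q⁻¹ ^ s * (1 : k) ^ t)⁻¹ ^ m) ≠ 0 :=
    mul_ne_zero (zpow_ne_zero _ (inv_ne_zero hqa)) (zpow_ne_zero _ (inv_ne_zero hqb))
  have f1 : MutM ((((1 : k) ^ s * q ^ t)⁻¹ ^ n * (q⁻¹ ^ s * (1 : k) ^ t)⁻¹ ^ m)⁻¹)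
      (V₁ ^ n * V₂ ^ m) (V₁ ^ s * V₂ ^ t) := mutM_symm hne e1
  have hparam : ((((1 : k) ^ s * q ^ t)⁻¹ ^ n * (q⁻¹ ^ s * (1 : k) ^ t)⁻¹ ^ m)⁻¹)
      = q ^ (n * t - m * s) := by
    rw [one_zpow, one_zpow, one_mul, mul_one, ← zpow_neg, ← zpow_mul,
      ← zpow_neg_one q, ← zpow_mul, ← zpow_neg, ← zpow_mul,
      ← zpow_add₀ hq0, ← zpow_neg]
    congr 1; ring
  rw [hparam] at f1
  exact ⟨hIP.1, hIQ.1, hIP.2, hIQ.2, f1.1, f1.2.1, f1.2.2.1, f1.2.2.2.1,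
    f1.2.2.2.2.1, f1.2.2.2.2.2⟩
end

section
/- If (U₁, U₂) is a type III quantum matrix pair with parameters q, r, then (U₁^n, U₂^n) is a type III quantum matrix pair with parameters q^{n²}, r^n, for all integers n. In particular α₁(n)β₂(n) = q^{n²} β₂(n) γ₁(n), where αᵢ(n) = αᵢ^n, γᵢ(n) = γᵢ^n, βᵢ(n) = [n]_r βᵢγᵢ^{n-1}. -/
/-! Every type III relation has the shape `u * x = s • (x * v)` with `u`, `v` units, and such a
relation propagates to `u ^ n * x = s ^ n • (x * v ^ n)` for all `n : ℤ` (for negative `n` through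
the inverted relation `u⁻¹ * x = s⁻¹ • (x * v⁻¹)`). The relations of the new pair follow by moving
the factors of the new entries past each other one at a time; the exponents combine as
`q ^ n * q ^ ((n - 1) * n) = q ^ (n * n)`, and the central scalar `[n]_r` is carried along. -/

/-- The type III relations with parameters `q`, `r`: internal relations (ID2),
(IND2) and mutual relations (MD2), (MND). -/
def TypeIIIRel {k A : Type*} [Field k] [Ring A] [Algebra k A] (q r : k)
    (a1 b1 c1 a2 b2 c2 : A) : Prop :=
  a1 * c1 = c1 * a1 ∧ a2 * c2 = c2 * a2 ∧
  a1 * b1 = r • (b1 * c1) ∧ a2 * b2 = r • (b2 * c2) ∧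
  a1 * a2 = q • (a2 * a1) ∧ a1 * c2 = q⁻¹ • (c2 * a1) ∧
  a2 * c1 = q • (c1 * a2) ∧ c1 * c2 = q • (c2 * c1) ∧
  a1 * b2 = q • (b2 * c1) ∧ b1 * c2 = q • (a2 * b1)

section SkewCommutation

variable {k A : Type*} [Field k] [Ring A] [Algebra k A]

theorem units_pow_mul_eq_smul {u v : Aˣ} {x : A} {s : k}
    (h : (u : A) * x = s • (x * v)) (n : ℕ) :
    ((u ^ n : Aˣ) : A) * x = s ^ n • (x * ((v ^ n : Aˣ) : A)) := by
  induction n with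
  | zero => simp
  | succ n ih =>
    rw [pow_succ, Units.val_mul, mul_assoc, h, mul_smul_comm, ← mul_assoc, ih, smul_mul_assoc,
      smul_smul, mul_assoc, ← Units.val_mul, ← pow_succ, ← pow_succ']

theorem units_inv_mul_eq_smul {u v : Aˣ} {x : A} {s : k} (hs : s ≠ 0)
    (h : (u : A) * x = s • (x * v)) :
    ((u⁻¹ : Aˣ) : A) * x = s⁻¹ • (x * ((v⁻¹ : Aˣ) : A)) := by
  have hxv : x * v = s⁻¹ • ((u : A) * x) := by rw [h, smul_smul, inv_mul_cancel₀ hs, one_smul]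
  calc ((u⁻¹ : Aˣ) : A) * x = (u⁻¹ : Aˣ) * (x * v) * ((v⁻¹ : Aˣ) : A) := by simp [mul_assoc]
    _ = s⁻¹ • (x * ((v⁻¹ : Aˣ) : A)) := by
      rw [hxv, mul_smul_comm, smul_mul_assoc, ← mul_assoc, Units.inv_mul, one_mul]

theorem units_zpow_mul_eq_smul {u v : Aˣ} {x : A} {s : k} (hs : s ≠ 0)
    (h : (u : A) * x = s • (x * v)) (n : ℤ) :
    ((u ^ n : Aˣ) : A) * x = s ^ n • (x * ((v ^ n : Aˣ) : A)) := by
  obtain ⟨m, rfl | rfl⟩ := Int.eq_nat_or_neg n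
  · simpa only [zpow_natCast] using units_pow_mul_eq_smul h m
  · simpa only [zpow_neg, zpow_natCast, inv_pow] using
      units_pow_mul_eq_smul (units_inv_mul_eq_smul hs h) m

theorem mul_units_zpow_eq_smul {u v : Aˣ} {x : A} {s : k} (hs : s ≠ 0)
    (h : x * u = s • ((v : A) * x)) (n : ℤ) :
    x * ((u ^ n : Aˣ) : A) = s ^ n • (((v ^ n : Aˣ) : A) * x) := by
  have hvx : (v : A) * x = s⁻¹ • (x * u) := by rw [h, smul_smul, inv_mul_cancel₀ hs, one_smul]
  rw [units_zpow_mul_eq_smul (inv_ne_zero hs) hvx n, smul_smul, inv_zpow, mul_inv_cancel₀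
    (zpow_ne_zero n hs), one_smul]

theorem units_zpow_mul_units_zpow {u w : Aˣ} {s : k} (hs : s ≠ 0)
    (h : (u : A) * w = s • ((w : A) * u)) (m l : ℤ) :
    ((u ^ m : Aˣ) : A) * ((w ^ l : Aˣ) : A)
      = s ^ (l * m) • (((w ^ l : Aˣ) : A) * ((u ^ m : Aˣ) : A)) := by
  rw [units_zpow_mul_eq_smul (zpow_ne_zero l hs) (mul_units_zpow_eq_smul hs h l) m, zpow_mul]

theorem units_zpow_mul_smul_mul_units_zpow {u v w : Aˣ} {x : A} {s t : k} (hs : s ≠ 0)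
    (ht : t ≠ 0) (hux : (u : A) * x = s • (x * v)) (hvw : (v : A) * w = t • ((w : A) * v))
    (c : k) (n m : ℤ) :
    ((u ^ n : Aˣ) : A) * (c • (x * ((w ^ m : Aˣ) : A)))
      = (s ^ n * t ^ (m * n)) • (c • (x * ((w ^ m : Aˣ) : A)) * ((v ^ n : Aˣ) : A)) := by
  rw [mul_smul_comm, ← mul_assoc, units_zpow_mul_eq_smul hs hux n, smul_mul_assoc, mul_assoc,
    units_zpow_mul_units_zpow ht hvw n m, mul_smul_comm, smul_mul_assoc, mul_assoc]
  module

theorem smul_mul_units_zpow_mul_units_zpow {u v w : Aˣ} {x : A} {s t : k} (hs : s ≠ 0)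
    (ht : t ≠ 0) (hxv : x * v = s • ((u : A) * x)) (hwv : (w : A) * v = t • ((v : A) * w))
    (c : k) (n m : ℤ) :
    c • (x * ((w ^ m : Aˣ) : A)) * ((v ^ n : Aˣ) : A)
      = (t ^ (n * m) * s ^ n) • (((u ^ n : Aˣ) : A) * (c • (x * ((w ^ m : Aˣ) : A)))) := by
  rw [smul_mul_assoc, mul_assoc, units_zpow_mul_units_zpow ht hwv m n, mul_smul_comm,
    ← mul_assoc, mul_units_zpow_eq_smul hs hxv n, smul_mul_assoc, mul_smul_comm, mul_assoc]
  module

end SkewCommutation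

theorem typeIII_new_pairs_general {k A : Type*} [Field k] [Ring A] [Algebra k A]
    (q r : k) (hq0 : q ≠ 0) (hr0 : r ≠ 0)
    (α₁ γ₁ α₂ γ₂ : Aˣ) (β₁ β₂ : A)
    (hrel : TypeIIIRel q r (α₁ : A) β₁ (γ₁ : A) (α₂ : A) β₂ (γ₂ : A)) :
    ∀ n : ℤ,
      TypeIIIRel (q ^ (n * n)) (r ^ n)
        ((α₁ ^ n : Aˣ) : A) (((1 - r ^ n) / (1 - r)) • (β₁ * ((γ₁ ^ (n - 1) : Aˣ) : A)))
        ((γ₁ ^ n : Aˣ) : A)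
        ((α₂ ^ n : Aˣ) : A) (((1 - r ^ n) / (1 - r)) • (β₂ * ((γ₂ ^ (n - 1) : Aˣ) : A)))
        ((γ₂ ^ n : Aˣ) : A) ∧
      ((α₁ ^ n : Aˣ) : A) * (((1 - r ^ n) / (1 - r)) • (β₂ * ((γ₂ ^ (n - 1) : Aˣ) : A)))
        = q ^ (n * n) • ((((1 - r ^ n) / (1 - r)) • (β₂ * ((γ₂ ^ (n - 1) : Aˣ) : A))) *
            ((γ₁ ^ n : Aˣ) : A)) := by
  obtain ⟨hαγ₁, hαγ₂, hαβ₁, hαβ₂, hαα, hαγ₁₂, hαγ₂₁, hγγ, hαβ₁₂, hβγ₁₂⟩ := hrel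
  intro n
  set R := (1 - r ^ n) / (1 - r)
  have hαβ : ∀ {α γ : Aˣ} {β : A}, (α : A) * β = r • (β * γ) →
      ((α ^ n : Aˣ) : A) * (R • (β * ((γ ^ (n - 1) : Aˣ) : A)))
        = r ^ n • (R • (β * ((γ ^ (n - 1) : Aˣ) : A)) * ((γ ^ n : Aˣ) : A)) := fun h => by
    simpa only [one_zpow, mul_one] using
      units_zpow_mul_smul_mul_units_zpow hr0 one_ne_zero h (one_smul k _).symm R n (n - 1)
  have hαβ₂₁ : ((α₁ ^ n : Aˣ) : A) * (R • (β₂ * ((γ₂ ^ (n - 1) : Aˣ) : A)))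
      = q ^ (n * n) • (R • (β₂ * ((γ₂ ^ (n - 1) : Aˣ) : A)) * ((γ₁ ^ n : Aˣ) : A)) := by
    rw [units_zpow_mul_smul_mul_units_zpow hq0 hq0 hαβ₁₂ hγγ, ← zpow_add₀ hq0]
    ring_nf
  refine ⟨⟨(Commute.units_zpow_right (Commute.units_zpow_left hαγ₁ n) n).eq,
    (Commute.units_zpow_right (Commute.units_zpow_left hαγ₂ n) n).eq, hαβ hαβ₁, hαβ hαβ₂,
    units_zpow_mul_units_zpow hq0 hαα n n, ?_, units_zpow_mul_units_zpow hq0 hαγ₂₁ n n,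
    units_zpow_mul_units_zpow hq0 hγγ n n, hαβ₂₁, ?_⟩, hαβ₂₁⟩
  · rw [units_zpow_mul_units_zpow (inv_ne_zero hq0) hαγ₁₂, inv_zpow]
  · rw [smul_mul_units_zpow_mul_units_zpow hq0 hq0 hβγ₁₂ hγγ, ← zpow_add₀ hq0]
    ring_nf

/-- If `(U₁, U₂)` is a type III quantum matrix pair with parameters `q, r`, then
`(U₁ⁿ, U₂ⁿ)` is a type III quantum matrix pair with parameters `q^{n²}, rⁿ`,
where the entries of `Uᵢⁿ` are `αᵢⁿ`, `[n]_r βᵢ γᵢ^{n-1}`, `γᵢⁿ`. In particular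
`α₁(n) β₂(n) = q^{n²} β₂(n) γ₁(n)`. -/
theorem typeIII_new_pairs {k A : Type*} [Field k] [Ring A] [Algebra k A]
    (q r : k) (hq0 : q ≠ 0) (hr0 : r ≠ 0) (hr1 : r ≠ 1)
    (α₁ γ₁ α₂ γ₂ : Aˣ) (β₁ β₂ : A)
    (hrel : TypeIIIRel q r (α₁ : A) β₁ (γ₁ : A) (α₂ : A) β₂ (γ₂ : A)) :
    ∀ n : ℤ,
      TypeIIIRel (q ^ (n * n)) (r ^ n)
        ((α₁ ^ n : Aˣ) : A) (((1 - r ^ n) / (1 - r)) • (β₁ * ((γ₁ ^ (n - 1) : Aˣ) : A)))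
        ((γ₁ ^ n : Aˣ) : A)
        ((α₂ ^ n : Aˣ) : A) (((1 - r ^ n) / (1 - r)) • (β₂ * ((γ₂ ^ (n - 1) : Aˣ) : A)))
        ((γ₂ ^ n : Aˣ) : A) ∧
      ((α₁ ^ n : Aˣ) : A) * (((1 - r ^ n) / (1 - r)) • (β₂ * ((γ₂ ^ (n - 1) : Aˣ) : A)))
        = q ^ (n * n) • ((((1 - r ^ n) / (1 - r)) • (β₂ * ((γ₂ ^ (n - 1) : Aˣ) : A))) *
            ((γ₁ ^ n : Aˣ) : A)) :=
  typeIII_new_pairs_general q r hq0 hr0 α₁ γ₁ α₂ γ₂ β₁ β₂ hrel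
end

section
/- On the space of type II quantum matrix pairs with fixed parameter q, the transformations S(U₁,U₂) = (U₂, U₁⁻¹) and T(U₁,U₂) = (U₁U₂, U₂) are well defined (map type II pairs to type II pairs with the same q) and satisfy S⁴ = id and (ST)³ = id, yielding an action of the modular group SL(2,ℤ). -/
/-- A pair of invertible `2 × 2` matrices is a type II quantum matrix pair with
parameter `q` if both matrices are upper triangular with invertible diagonal
entries, satisfying the type II relations. -/
def IsTypeIIPair {k A : Type*} [Field k] [Ring A] [Algebra k A] (q : k)
    (p : (Matrix (Fin 2) (Fin 2) A)ˣ × (Matrix (Fin 2) (Fin 2) A)ˣ) : Prop :=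
  ∃ a1 b1 c1 a2 b2 c2 : A, IsUnit a1 ∧ IsUnit c1 ∧ IsUnit a2 ∧ IsUnit c2 ∧
    p.1.val = !![a1, b1; 0, c1] ∧
    p.2.val = !![a2, b2; 0, c2] ∧
    TypeIIRel q a1 b1 c1 a2 b2 c2

/-- The modular transformation `S : (U₁, U₂) ↦ (U₂, U₁⁻¹)`. -/
def modS {G : Type*} [Group G] (p : G × G) : G × G := (p.2, p.1⁻¹)

/-- The modular transformation `T : (U₁, U₂) ↦ (U₁U₂, U₂)`. -/
def modT {G : Type*} [Group G] (p : G × G) : G × G := (p.1 * p.2, p.2)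

section QMHelpers
variable {k A : Type*} [Field k] [Ring A] [Algebra k A]

lemma qmL1 (u : Aˣ) (x : A) (s : k) (h : ↑u * x = s • (x * ↑u)) :
    x * ↑u⁻¹ = s • ((↑u⁻¹ : A) * x) := by
  have h2 := congrArg (fun y => (↑u⁻¹ : A) * y * ↑u⁻¹) h
  simpa [mul_assoc, mul_smul_comm, smul_mul_assoc] using h2

lemma qmL2 (u : Aˣ) (x : A) (s : k) (hs : s ≠ 0) (h : ↑u * x = s • (x * ↑u)) :
    (↑u⁻¹ : A) * x = s⁻¹ • (x * ↑u⁻¹) := by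
  rw [qmL1 u x s h, inv_smul_smul₀ hs]

lemma qmL3 (u : Aˣ) (x : A) (s : k) (h : x * ↑u = s • (↑u * x)) :
    (↑u⁻¹ : A) * x = s • (x * ↑u⁻¹) := by
  have h2 := congrArg (fun y => (↑u⁻¹ : A) * y * ↑u⁻¹) h
  simpa [mul_assoc, mul_smul_comm, smul_mul_assoc] using h2

lemma qmL4 (u : Aˣ) (x : A) (s : k) (hs : s ≠ 0) (h : x * ↑u = s • (↑u * x)) :
    x * ↑u⁻¹ = s⁻¹ • ((↑u⁻¹ : A) * x) := by
  rw [qmL3 u x s h, inv_smul_smul₀ hs]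

lemma qmExt {X Y Z W : A} (h : X * Y = Z * W) (t : A) :
    X * (Y * t) = Z * (W * t) := by rw [← mul_assoc, h, mul_assoc]

lemma qmExtS {s : k} {X Y Z W : A} (h : X * Y = s • (Z * W)) (t : A) :
    X * (Y * t) = s • (Z * (W * t)) := by
  rw [← mul_assoc, h, smul_mul_assoc, mul_assoc]

end QMHelpers

/-- On type II quantum matrix pairs with fixed parameter `q`, the transformations
`S(U₁,U₂) = (U₂, U₁⁻¹)` and `T(U₁,U₂) = (U₁U₂, U₂)` are well defined and satisfy
`S⁴ = id` and `(ST)³ = id`, giving an action of the modular group `SL(2,ℤ)`. -/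
theorem typeII_modular_action {k A : Type*} [Field k] [CharZero k] [Ring A] [Algebra k A]
    (q : k) (hq0 : q ≠ 0) (hq1 : q ≠ 1)
    (p : (Matrix (Fin 2) (Fin 2) A)ˣ × (Matrix (Fin 2) (Fin 2) A)ˣ)
    (hp : IsTypeIIPair q p) :
    IsTypeIIPair q (modS p) ∧ IsTypeIIPair q (modT p) ∧
    modS (modS (modS (modS p))) = p ∧
    (modS ∘ modT) ((modS ∘ modT) ((modS ∘ modT) p)) = p := by

  obtain ⟨a1, b1, c1, a2, b2, c2, hu1, hu3, hu2, hu4, hP1, hP2, rels⟩ := hp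
  obtain ⟨ua, rfl⟩ := hu1
  obtain ⟨uc, rfl⟩ := hu3
  obtain ⟨va, rfl⟩ := hu2
  obtain ⟨vc, rfl⟩ := hu4
  unfold TypeIIRel at rels
  obtain ⟨h1, h2, h3, h4, h5, h6, h7, h8, h9, h10⟩ := rels
  -- derived relations for the S-transform
  have hu12 : ua * uc = uc * ua := Units.ext h1
  have S2 : (↑ua⁻¹ : A) * ↑uc⁻¹ = ↑uc⁻¹ * ↑ua⁻¹ := by
    have h := congrArg (fun u : Aˣ => ((u⁻¹ : Aˣ) : A)) hu12
    simpa [mul_inv_rev] using h.symm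
  have hb : (↑ua⁻¹ : A) * b1 = b1 * ↑uc⁻¹ := by
    have h := congrArg (fun y => (↑ua⁻¹ : A) * y * ↑uc⁻¹) h3
    simpa [mul_assoc] using h.symm
  have S5 : (va : A) * ↑ua⁻¹ = q • ((↑ua⁻¹ : A) * va) := qmL1 ua va q h5
  have S6 : (va : A) * ↑uc⁻¹ = q⁻¹ • ((↑uc⁻¹ : A) * va) := qmL4 uc va q hq0 h7
  have S7 : (↑ua⁻¹ : A) * vc = q • ((vc : A) * ↑ua⁻¹) := by
    have h := qmL2 ua (vc : A) q⁻¹ (inv_ne_zero hq0) h6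
    rwa [inv_inv] at h
  have S8 : (vc : A) * ↑uc⁻¹ = q • ((↑uc⁻¹ : A) * vc) := qmL1 uc vc q h8
  have S10 : b2 * ↑uc⁻¹ = q • ((↑ua⁻¹ : A) * b2) := by
    have h := congrArg (fun y => (↑ua⁻¹ : A) * y * ↑uc⁻¹) h9
    simpa [mul_assoc, mul_smul_comm, smul_mul_assoc] using h
  have hxb1 : (va : A) * b1 = q⁻¹ • (b1 * vc) := by
    rw [h10, inv_smul_smul₀ hq0]
  have S4 : (↑ua⁻¹ : A) * (-((↑ua⁻¹ : A) * b1 * ↑uc⁻¹)) =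
      (-((↑ua⁻¹ : A) * b1 * ↑uc⁻¹)) * ↑uc⁻¹ := by
    simp only [mul_neg, neg_mul, smul_neg, neg_inj, mul_assoc, smul_mul_assoc,
      mul_smul_comm, smul_smul, hb, qmExt hb, S5, qmExtS S5, S8, qmExtS S8,
      hxb1, qmExtS hxb1]
  have S9 : (va : A) * (-((↑ua⁻¹ : A) * b1 * ↑uc⁻¹)) =
      q • ((-((↑ua⁻¹ : A) * b1 * ↑uc⁻¹)) * vc) := by
    simp only [mul_neg, neg_mul, smul_neg, neg_inj, mul_assoc, smul_mul_assoc,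
      mul_smul_comm, smul_smul, hb, qmExt hb, S5, qmExtS S5, S8, qmExtS S8,
      hxb1, qmExtS hxb1]
    simp [mul_inv_cancel₀ hq0, inv_mul_cancel₀ hq0, inv_mul_cancel_left₀ hq0,
      mul_inv_cancel_left₀ hq0, smul_smul]
  -- the inverse matrix
  have hinv : (p.1⁻¹).val =
      !![(↑ua⁻¹ : A), -((↑ua⁻¹ : A) * b1 * ↑uc⁻¹); 0, ↑uc⁻¹] := by
    apply Units.inv_eq_of_mul_eq_one_right
    rw [hP1]
    simp [Matrix.mul_fin_two, Matrix.one_fin_two, mul_assoc]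
  -- the product matrix
  have hprod : (p.1 * p.2).val =
      !![(ua : A) * va, (ua : A) * b2 + b1 * (vc : A); 0, (uc : A) * vc] := by
    rw [Units.val_mul, hP1, hP2]
    simp [Matrix.mul_fin_two]
  refine ⟨⟨(va : A), b2, (vc : A), (↑ua⁻¹ : A), -((↑ua⁻¹ : A) * b1 * ↑uc⁻¹), (↑uc⁻¹ : A),
      va.isUnit, vc.isUnit, (ua⁻¹).isUnit, (uc⁻¹).isUnit, hP2, ?_,
      h2, S2, h4, S4, S5, S6, S7, S8, S9, S10⟩,
    ⟨(ua : A) * va, (ua : A) * b2 + b1 * (vc : A), (uc : A) * vc, (va : A), b2, (vc : A),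
      (ua * va).isUnit, (uc * vc).isUnit, va.isUnit, vc.isUnit, hprod, hP2,
      ?_, h2, ?_, h4, ?_, ?_, ?_, ?_, ?_, ?_⟩, ?_, ?_⟩
  · exact hinv
  rotate_right 2
  · simp [modS, modT, mul_inv_rev, mul_assoc]
  · simp [modS, modT, mul_inv_rev, mul_assoc]
  all_goals
  · simp only [mul_add, add_mul, smul_add, mul_assoc, smul_mul_assoc, mul_smul_comm,
      smul_smul,
      h1, qmExt h1, h2, qmExt h2, h3, qmExt h3, h4, qmExt h4,
      h5, qmExtS h5, h6, qmExtS h6, h7, qmExtS h7, h8, qmExtS h8,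
      h9, qmExtS h9, h10, qmExtS h10]
    try simp [mul_inv_cancel₀ hq0, inv_mul_cancel₀ hq0, inv_mul_cancel_left₀ hq0,
      mul_inv_cancel_left₀ hq0, smul_smul]
end
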